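/- arXiv:1803.04011 — 7 statements merged into one kernel-verified Lean document; each statement's English description precedes it below -/
import Mathlib

section
/- Let R be an associative unital ring containing central invertible elements s and P, and invertible elements λ and m satisfying the commutation relation m·λ = s·λ·m (s and P commute with everything). Write q = s², Q = P², μ = m² (so μ·λ = q·λ·μ). Define qAug_T(λ,μ,Q,q) = q·Q³·μ³·(Q − q⁻³μ²)·(Q − q⁻¹μ) + s⁻⁵·(Q − q⁻²μ²)·((q²μ² + q³μ² − q³μ + q⁴)·Q² − (qμ³ + q³μ² + qμ²)·Q + μ⁴)·λ + (Q − q⁻¹μ²)·(μ − q)·λ², and define P_T(L,M,x,w) = x⁴·(x²M² − 1)·(w⁶x²M⁴ − 1) + w⁷·(w⁴x²M⁴ − 1)·(w⁸x⁴M⁸ − w⁴x⁴M⁶ + w²x⁴M⁴ + x⁴M⁴ − w⁶x²M⁴ − w²x²M⁴ − x²M² + 1)·L − w¹⁸·x²·M⁶·(w⁴M² − 1)·(w²x²M⁴ − 1)·L². Then, substituting L = q⁻¹Q⁻¹λ, M = s⁻¹m⁻¹, x = qP, w = s (note that these substituted elements satisfy LM = sML), one has the identity P_T(q⁻¹Q⁻¹λ,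 s⁻¹m⁻¹, qP, s) = q⁷·Q⁻¹·μ⁻⁶·qAug_T(λ,μ,Q,q) in R. -/
set_option maxHeartbeats 2000000

lemma trefoil_coef0 {T : Type*} [CommRing T] (a ai b bi c ci : T)
    (ha : a * ai = 1) (hb : b * bi = 1) (hc : c * ci = 1) :
    (a ^ 2 * b) ^ 4 * ((a ^ 2 * b) ^ 2 * (ai * ci) ^ 2 - 1) * (a ^ 6 * (a ^ 2 * b) ^ 2 * (ai * ci) ^ 4 - 1)
    = (a ^ 2) ^ 7 * bi ^ 2 * (ci ^ 2) ^ 6 * (a ^ 2 * (b ^ 2) ^ 3 * (c ^ 2) ^ 3 * (b ^ 2 - (ai ^ 2) ^ 3 * (c ^ 2) ^ 2) * (b ^ 2 - ai ^ 2 * c ^ 2)) := by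
  linear_combination (-a^8 * b^6 * bi^2 * c^12 * ci^12 - a^9 * ai * b^6 * bi^2 * c^12 * ci^12 - a^10 * b^6 * ci^2 + a^10 * b^8 * bi^2 * c^10 * ci^12 - a^10 * ai^2 * b^6 * bi^2 * c^12 * ci^12 - a^11 * ai * b^6 * ci^2 + a^11 * ai * b^8 * bi^2 * c^10 * ci^12 - a^11 * ai^3 * b^6 * bi^2 * c^12 * ci^12 + a^12 * ai^2 * b^8 * bi^2 * c^10 * ci^12 - a^12 * ai^4 * b^6 * bi^2 * c^12 * ci^12 + a^13 * ai^3 * b^8 * bi^2 * c^10 * ci^12 - a^13 * ai^5 * b^6 * bi^2 * c^12 * ci^12 - a^14 * b^6 * ci^4 + a^14 * b^8 * bi^2 * c^8 * ci^12 + a^14 * ai^4 * b^8 * bi^2 * c^10 * ci^12 - a^14 * ai^6 * b^6 * bi^2 * c^12 * ci^12 - a^15 * ai * b^6 * ci^4 + a^15 * ai * b^8 * bi^2 * c^8 * ci^12 + a^15 * ai^5 * b^8 * bi^2 * c^10 * ci^12 - a^15 * ai^7 * b^6 * bi^2 * c^12 * ci^12 + a^16 * b^8 * ci^6 - a^16 *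 ai^2 * b^6 * ci^4 + a^17 * ai * b^8 * ci^6 - a^17 * ai^3 * b^6 * ci^4 + a^18 * ai^2 * b^8 * ci^6 + a^19 * ai^3 * b^8 * ci^6 + a^20 * ai^4 * b^8 * ci^6 + a^21 * ai^5 * b^8 * ci^6) * ha + (-a^8 * b^4 * c^12 * ci^12 - a^8 * b^5 * bi * c^12 * ci^12 + a^10 * b^6 * c^10 * ci^12 + a^10 * b^7 * bi * c^10 * ci^12 + a^14 * b^6 * c^8 * ci^12 + a^14 * b^7 * bi * c^8 * ci^12 - a^16 * b^8 * c^6 * ci^12 - a^16 * b^9 * bi * c^6 * ci^12) * hb + (-a^8 * b^4 - a^8 * b^4 * c * ci - a^8 * b^4 * c^2 * ci^2 - a^8 * b^4 * c^3 * ci^3 - a^8 * b^4 * c^4 * ci^4 - a^8 * b^4 * c^5 * ci^5 - a^8 * b^4 * c^6 * ci^6 - a^8 * b^4 * c^7 * ci^7 - a^8 * b^4 * c^8 * ci^8 - a^8 * b^4 * c^9 * ci^9 - a^8 * b^4 * c^10 * ci^10 - a^8 * b^4 * c^11 * ci^11 + a^10 * b^6 * ci^2 + a^10 * b^6 * c *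 ci^3 + a^10 * b^6 * c^2 * ci^4 + a^10 * b^6 * c^3 * ci^5 + a^10 * b^6 * c^4 * ci^6 + a^10 * b^6 * c^5 * ci^7 + a^10 * b^6 * c^6 * ci^8 + a^10 * b^6 * c^7 * ci^9 + a^10 * b^6 * c^8 * ci^10 + a^10 * b^6 * c^9 * ci^11 + a^14 * b^6 * ci^4 + a^14 * b^6 * c * ci^5 + a^14 * b^6 * c^2 * ci^6 + a^14 * b^6 * c^3 * ci^7 + a^14 * b^6 * c^4 * ci^8 + a^14 * b^6 * c^5 * ci^9 + a^14 * b^6 * c^6 * ci^10 + a^14 * b^6 * c^7 * ci^11 - a^16 * b^8 * ci^6 - a^16 * b^8 * c * ci^7 - a^16 * b^8 * c^2 * ci^8 - a^16 * b^8 * c^3 * ci^9 - a^16 * b^8 * c^4 * ci^10 - a^16 * b^8 * c^5 * ci^11) * hc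

lemma trefoil_coef1 {T : Type*} [CommRing T] (a ai b bi c ci : T)
    (ha : a * ai = 1) (hb : b * bi = 1) (hc : c * ci = 1) :
    a ^ 7 * (a ^ 4 * (a ^ 2 * b) ^ 2 * (ai * ci) ^ 4 - 1) * (a ^ 8 * (a ^ 2 * b) ^ 4 * (ai * ci) ^ 8 - a ^ 4 * (a ^ 2 * b) ^ 4 * (ai * ci) ^ 6 + a ^ 2 * (a ^ 2 * b) ^ 4 * (ai * ci) ^ 4 + (a ^ 2 * b) ^ 4 * (ai * ci) ^ 4 - a ^ 6 * (a ^ 2 * b) ^ 2 * (ai * ci) ^ 4 - a ^ 2 * (a ^ 2 * b) ^ 2 * (ai * ci) ^ 4 - (a ^ 2 * b) ^ 2 * (ai * ci) ^ 2 + 1) * (ai ^ 2 * bi ^ 2)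
    = (a ^ 2) ^ 7 * bi ^ 2 * (ci ^ 2) ^ 6 * (ai ^ 5 * (b ^ 2 - (ai ^ 2) ^ 2 * (c ^ 2) ^ 2) * (((a ^ 2) ^ 2 * (c ^ 2) ^ 2 + (a ^ 2) ^ 3 * (c ^ 2) ^ 2 - (a ^ 2) ^ 3 * c ^ 2 + (a ^ 2) ^ 4) * (b ^ 2) ^ 2 - (a ^ 2 * (c ^ 2) ^ 3 + (a ^ 2) ^ 3 * (c ^ 2) ^ 2 + a ^ 2 * (c ^ 2) ^ 2) * b ^ 2 + (c ^ 2) ^ 4)) := by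
  linear_combination (-a^5 * bi^2 + a^5 * bi^2 * c^12 * ci^12 - a^6 * ai * bi^2 + a^6 * ai * bi^2 * c^12 * ci^12 + a^7 * b^2 * bi^2 * ci^2 + a^7 * b^2 * bi^2 * ci^4 - a^7 * b^2 * bi^2 * c^8 * ci^12 - a^7 * b^2 * bi^2 * c^10 * ci^12 + a^7 * ai^2 * bi^2 * c^12 * ci^12 + a^8 * ai * b^2 * bi^2 * ci^2 + a^8 * ai * b^2 * bi^2 * ci^4 - a^8 * ai * b^2 * bi^2 * c^8 * ci^12 - a^8 * ai * b^2 * bi^2 * c^10 * ci^12 + a^8 * ai^3 * bi^2 * c^12 * ci^12 + a^9 * b^2 * bi^2 * ci^4 - a^9 * b^2 * bi^2 * c^8 * ci^12 - a^9 * b^4 * bi^2 * ci^4 + a^9 * b^4 * bi^2 * c^8 * ci^12 + a^9 * ai^2 * b^2 * bi^2 * ci^2 + a^9 * ai^2 * b^2 * bi^2 * ci^4 - a^9 * ai^2 * b^2 * bi^2 * c^8 * ci^12 - a^9 * ai^2 * b^2 * bi^2 * c^10 * ci^12 + a^9 * ai^4 * bi^2 * c^12 * ci^12 + a^10 * ai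 * b^2 * bi^2 * ci^4 - a^10 * ai * b^2 * bi^2 * c^8 * ci^12 - a^10 * ai * b^4 * bi^2 * ci^4 + a^10 * ai * b^4 * bi^2 * c^8 * ci^12 + a^10 * ai^3 * b^2 * bi^2 * ci^2 + a^10 * ai^3 * b^2 * bi^2 * ci^4 - a^10 * ai^3 * b^2 * bi^2 * c^8 * ci^12 - a^10 * ai^3 * b^2 * bi^2 * c^10 * ci^12 + a^10 * ai^5 * bi^2 * c^12 * ci^12 + a^11 * b^2 * bi^2 * ci^4 - a^11 * b^2 * bi^2 * c^8 * ci^12 - a^11 * b^4 * bi^2 * ci^4 - a^11 * b^4 * bi^2 * ci^8 + a^11 * b^4 * bi^2 * c^4 * ci^12 + a^11 * b^4 * bi^2 * c^8 * ci^12 + a^11 * ai^2 * b^2 * bi^2 * ci^4 - a^11 * ai^2 * b^2 * bi^2 * c^8 * ci^12 - a^11 * ai^2 * b^4 * bi^2 * ci^4 + a^11 * ai^2 * b^4 * bi^2 * c^8 * ci^12 + a^11 * ai^4 * b^2 * bi^2 * ci^4 - a^11 * ai^4 * b^2 * bi^2 * c^8 * ci^12 - a^11 * ai^4 * b^2 *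 bi^2 * c^10 * ci^12 + a^11 * ai^6 * bi^2 * c^12 * ci^12 + a^12 * ai * b^2 * bi^2 * ci^4 - a^12 * ai * b^2 * bi^2 * c^8 * ci^12 - a^12 * ai * b^4 * bi^2 * ci^4 - a^12 * ai * b^4 * bi^2 * ci^8 + a^12 * ai * b^4 * bi^2 * c^4 * ci^12 + a^12 * ai * b^4 * bi^2 * c^8 * ci^12 + a^12 * ai^3 * b^2 * bi^2 * ci^4 - a^12 * ai^3 * b^2 * bi^2 * c^8 * ci^12 - a^12 * ai^3 * b^4 * bi^2 * ci^4 + a^12 * ai^3 * b^4 * bi^2 * c^8 * ci^12 + a^12 * ai^5 * b^2 * bi^2 * ci^4 - a^12 * ai^5 * b^2 * bi^2 * c^8 * ci^12 - a^12 * ai^5 * b^2 * bi^2 * c^10 * ci^12 + a^12 * ai^7 * bi^2 * c^12 * ci^12 - a^13 * b^4 * bi^2 * ci^8 + a^13 * b^4 * bi^2 * c^4 * ci^12 + a^13 * b^6 * bi^2 * ci^8 - a^13 * b^6 * bi^2 * c^4 * ci^12 + a^13 * ai^2 * b^2 * bi^2 * ci^4 - a^13 * ai^2 * b^2 * bi^2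 * c^8 * ci^12 - a^13 * ai^2 * b^4 * bi^2 * ci^4 - a^13 * ai^2 * b^4 * bi^2 * ci^8 + a^13 * ai^2 * b^4 * bi^2 * c^4 * ci^12 + a^13 * ai^2 * b^4 * bi^2 * c^8 * ci^12 + a^13 * ai^4 * b^2 * bi^2 * ci^4 - a^13 * ai^4 * b^2 * bi^2 * c^8 * ci^12 - a^13 * ai^4 * b^4 * bi^2 * ci^4 + a^13 * ai^4 * b^4 * bi^2 * c^8 * ci^12 - a^13 * ai^6 * b^2 * bi^2 * c^8 * ci^12 - a^13 * ai^6 * b^2 * bi^2 * c^10 * ci^12 + a^13 * ai^8 * bi^2 * c^12 * ci^12 - a^14 * ai * b^4 * bi^2 * ci^8 + a^14 * ai * b^4 * bi^2 * c^4 * ci^12 + a^14 * ai * b^6 * bi^2 * ci^8 - a^14 * ai * b^6 * bi^2 * c^4 * ci^12 + a^14 * ai^3 * b^2 * bi^2 * ci^4 - a^14 * ai^3 * b^2 * bi^2 * c^8 * ci^12 - a^14 * ai^3 * b^4 * bi^2 * ci^4 - a^14 * ai^3 * b^4 * bi^2 * ci^8 + a^14 * ai^3 * b^4 * bi^2 *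 c^4 * ci^12 + a^14 * ai^3 * b^4 * bi^2 * c^8 * ci^12 + a^14 * ai^5 * b^2 * bi^2 * ci^4 - a^14 * ai^5 * b^4 * bi^2 * ci^4 + a^14 * ai^5 * b^4 * bi^2 * c^8 * ci^12 - a^14 * ai^7 * b^2 * bi^2 * c^8 * ci^12 - a^14 * ai^7 * b^2 * bi^2 * c^10 * ci^12 - a^15 * b^4 * bi^2 * ci^8 + a^15 * b^4 * bi^2 * c^4 * ci^12 + a^15 * b^6 * bi^2 * ci^8 - a^15 * b^6 * bi^2 * ci^10 + a^15 * b^6 * bi^2 * c^2 * ci^12 - a^15 * b^6 * bi^2 * c^4 * ci^12 - a^15 * ai^2 * b^4 * bi^2 * ci^8 + a^15 * ai^2 * b^4 * bi^2 * c^4 * ci^12 + a^15 * ai^2 * b^6 * bi^2 * ci^8 - a^15 * ai^2 * b^6 * bi^2 * c^4 * ci^12 + a^15 * ai^4 * b^2 * bi^2 * ci^4 - a^15 * ai^4 * b^2 * bi^2 * c^8 * ci^12 - a^15 * ai^4 * b^4 * bi^2 * ci^4 - a^15 * ai^4 * b^4 * bi^2 * ci^8 + a^15 * ai^4 * b^4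 * bi^2 * c^4 * ci^12 + a^15 * ai^4 * b^4 * bi^2 * c^8 * ci^12 + a^15 * ai^6 * b^4 * bi^2 * c^8 * ci^12 - a^15 * ai^8 * b^2 * bi^2 * c^8 * ci^12 - a^15 * ai^8 * b^2 * bi^2 * c^10 * ci^12 - a^16 * ai * b^4 * bi^2 * ci^8 + a^16 * ai * b^4 * bi^2 * c^4 * ci^12 + a^16 * ai * b^6 * bi^2 * ci^8 - a^16 * ai * b^6 * bi^2 * ci^10 + a^16 * ai * b^6 * bi^2 * c^2 * ci^12 - a^16 * ai * b^6 * bi^2 * c^4 * ci^12 - a^16 * ai^3 * b^4 * bi^2 * ci^8 + a^16 * ai^3 * b^4 * bi^2 * c^4 * ci^12 + a^16 * ai^3 * b^6 * bi^2 * ci^8 - a^16 * ai^3 * b^6 * bi^2 * c^4 * ci^12 + a^16 * ai^5 * b^2 * bi^2 * ci^4 - a^16 * ai^5 * b^2 * bi^2 * c^8 * ci^12 - a^16 * ai^5 * b^4 * bi^2 * ci^4 - a^16 * ai^5 * b^4 * bi^2 * ci^8 - a^16 * ai^5 * b^4 * bi^2 * c^6 * ci^12 + a^16 * ai^5 * b^4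 * bi^2 * c^8 * ci^12 + a^16 * ai^7 * b^4 * bi^2 * c^8 * ci^12 - a^17 * ai^2 * b^4 * bi^2 * ci^8 + a^17 * ai^2 * b^4 * bi^2 * c^4 * ci^12 + a^17 * ai^2 * b^6 * bi^2 * ci^8 - a^17 * ai^2 * b^6 * bi^2 * ci^10 + a^17 * ai^2 * b^6 * bi^2 * c^2 * ci^12 - a^17 * ai^2 * b^6 * bi^2 * c^4 * ci^12 - a^17 * ai^4 * b^4 * bi^2 * ci^8 + a^17 * ai^4 * b^4 * bi^2 * c^4 * ci^12 + a^17 * ai^4 * b^6 * bi^2 * ci^8 - a^17 * ai^4 * b^6 * bi^2 * c^4 * ci^12 - a^17 * ai^6 * b^2 * bi^2 * c^8 * ci^12 - a^17 * ai^6 * b^4 * bi^2 * ci^8 - a^17 * ai^6 * b^4 * bi^2 * c^6 * ci^12 + a^17 * ai^6 * b^4 * bi^2 * c^8 * ci^12 + a^17 * ai^8 * b^4 * bi^2 * c^8 * ci^12 - a^18 * ai^3 * b^4 * bi^2 * ci^8 + a^18 * ai^3 * b^4 * bi^2 * c^4 * ci^12 + a^18 * ai^3 * b^6 * bi^2 *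 ci^8 - a^18 * ai^3 * b^6 * bi^2 * ci^10 + a^18 * ai^3 * b^6 * bi^2 * c^2 * ci^12 - a^18 * ai^3 * b^6 * bi^2 * c^4 * ci^12 - a^18 * ai^5 * b^4 * bi^2 * ci^8 + a^18 * ai^5 * b^4 * bi^2 * c^4 * ci^12 + a^18 * ai^5 * b^6 * bi^2 * ci^8 - a^18 * ai^7 * b^2 * bi^2 * c^8 * ci^12 - a^18 * ai^7 * b^4 * bi^2 * ci^8 - a^18 * ai^7 * b^4 * bi^2 * c^6 * ci^12 + a^18 * ai^7 * b^4 * bi^2 * c^8 * ci^12 - a^19 * ai^4 * b^4 * bi^2 * ci^8 + a^19 * ai^4 * b^4 * bi^2 * c^4 * ci^12 + a^19 * ai^4 * b^6 * bi^2 * ci^8 - a^19 * ai^4 * b^6 * bi^2 * ci^10 + a^19 * ai^4 * b^6 * bi^2 * c^2 * ci^12 - a^19 * ai^4 * b^6 * bi^2 * c^4 * ci^12 - a^19 * ai^6 * b^4 * bi^2 * ci^8 + a^19 * ai^6 * b^4 * bi^2 * c^4 * ci^12 + a^19 * ai^6 * b^6 * bi^2 * ci^8 - a^19 * ai^8 *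 b^2 * bi^2 * c^8 * ci^12 - a^19 * ai^8 * b^4 * bi^2 * ci^8 - a^19 * ai^8 * b^4 * bi^2 * c^6 * ci^12 + a^19 * ai^8 * b^4 * bi^2 * c^8 * ci^12 - a^20 * ai^5 * b^4 * bi^2 * ci^8 + a^20 * ai^5 * b^6 * bi^2 * ci^8 - a^20 * ai^5 * b^6 * bi^2 * ci^10 - a^20 * ai^7 * b^4 * bi^2 * ci^8 + a^20 * ai^7 * b^4 * bi^2 * c^4 * ci^12 + a^20 * ai^7 * b^6 * bi^2 * ci^8 - a^20 * ai^9 * b^4 * bi^2 * ci^8 - a^21 * ai^6 * b^4 * bi^2 * ci^8 + a^21 * ai^6 * b^6 * bi^2 * ci^8 - a^21 * ai^6 * b^6 * bi^2 * ci^10 - a^21 * ai^8 * b^4 * bi^2 * ci^8 + a^21 * ai^8 * b^4 * bi^2 * c^4 * ci^12 + a^21 * ai^8 * b^6 * bi^2 * ci^8 + a^22 * ai^5 * b^6 * bi^2 * ci^12 - a^22 * ai^7 * b^4 * bi^2 * ci^8 + a^22 * ai^7 * b^6 * bi^2 * ci^8 - a^22 * ai^7 * b^6 * bi^2 * ci^10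 - a^22 * ai^9 * b^4 * bi^2 * ci^8 + a^22 * ai^9 * b^6 * bi^2 * ci^8 + a^23 * ai^6 * b^6 * bi^2 * ci^12 - a^23 * ai^8 * b^4 * bi^2 * ci^8 + a^23 * ai^8 * b^6 * bi^2 * ci^8 - a^23 * ai^8 * b^6 * bi^2 * ci^10 + a^24 * ai^7 * b^6 * bi^2 * ci^12 - a^24 * ai^9 * b^4 * bi^2 * ci^8 + a^24 * ai^9 * b^6 * bi^2 * ci^8 - a^24 * ai^9 * b^6 * bi^2 * ci^10 + a^25 * ai^8 * b^6 * bi^2 * ci^12 - a^25 * ai^10 * b^6 * bi^2 * ci^10 + a^26 * ai^9 * b^6 * bi^2 * ci^12 - a^26 * ai^11 * b^6 * bi^2 * ci^10 + a^27 * ai^10 * b^6 * bi^2 * ci^12 + a^28 * ai^11 * b^6 * bi^2 * ci^12 + a^29 * ai^12 * b^6 * bi^2 * ci^12 + a^30 * ai^13 * b^6 * bi^2 * ci^12) * ha + (a^7 * ci^2 + a^7 * ci^4 - a^7 * c^8 * ci^12 - a^7 * c^10 * ci^12 + a^7 * b * bi * ci^2 + a^7 * b * bi * ci^4 - a^7 *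 b * bi * c^8 * ci^12 - a^7 * b * bi * c^10 * ci^12 + a^9 * ci^4 - a^9 * c^8 * ci^12 + a^9 * b * bi * ci^4 - a^9 * b * bi * c^8 * ci^12 - a^9 * b^2 * ci^4 + a^9 * b^2 * c^8 * ci^12 - a^9 * b^3 * bi * ci^4 + a^9 * b^3 * bi * c^8 * ci^12 + a^11 * ci^4 - a^11 * c^8 * ci^12 + a^11 * b * bi * ci^4 - a^11 * b * bi * c^8 * ci^12 - a^11 * b^2 * ci^4 - a^11 * b^2 * ci^8 + a^11 * b^2 * c^4 * ci^12 + a^11 * b^2 * c^8 * ci^12 - a^11 * b^3 * bi * ci^4 - a^11 * b^3 * bi * ci^8 + a^11 * b^3 * bi * c^4 * ci^12 + a^11 * b^3 * bi * c^8 * ci^12 - a^13 * b^2 * ci^8 + a^13 * b^2 * c^4 * ci^12 - a^13 * b^3 * bi * ci^8 + a^13 * b^3 * bi * c^4 * ci^12 + a^13 * b^4 * ci^8 - a^13 * b^4 * c^4 * ci^12 + a^13 * b^5 * bi * ci^8 - a^13 * b^5 * bi * c^4 * ci^12 - a^15 * b^2 * ci^8 + a^15 * b^2 * c^4 * ci^12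 - a^15 * b^3 * bi * ci^8 + a^15 * b^3 * bi * c^4 * ci^12 + a^15 * b^4 * ci^8 - a^15 * b^4 * ci^10 + a^15 * b^4 * c^2 * ci^12 - a^15 * b^4 * c^4 * ci^12 + a^15 * b^5 * bi * ci^8 - a^15 * b^5 * bi * ci^10 + a^15 * b^5 * bi * c^2 * ci^12 - a^15 * b^5 * bi * c^4 * ci^12) * hb + (a^5 * bi^2 + a^5 * bi^2 * c * ci + a^5 * bi^2 * c^2 * ci^2 + a^5 * bi^2 * c^3 * ci^3 + a^5 * bi^2 * c^4 * ci^4 + a^5 * bi^2 * c^5 * ci^5 + a^5 * bi^2 * c^6 * ci^6 + a^5 * bi^2 * c^7 * ci^7 + a^5 * bi^2 * c^8 * ci^8 + a^5 * bi^2 * c^9 * ci^9 + a^5 * bi^2 * c^10 * ci^10 + a^5 * bi^2 * c^11 * ci^11 - a^7 * ci^2 - a^7 * ci^4 - a^7 * c * ci^3 - a^7 * c * ci^5 - a^7 * c^2 * ci^4 - a^7 * c^2 * ci^6 - a^7 * c^3 * ci^5 - a^7 * c^3 * ci^7 - a^7 * c^4 * ci^6 - a^7 * c^4 * ci^8 -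 a^7 * c^5 * ci^7 - a^7 * c^5 * ci^9 - a^7 * c^6 * ci^8 - a^7 * c^6 * ci^10 - a^7 * c^7 * ci^9 - a^7 * c^7 * ci^11 - a^7 * c^8 * ci^10 - a^7 * c^9 * ci^11 - a^9 * ci^4 - a^9 * c * ci^5 - a^9 * c^2 * ci^6 - a^9 * c^3 * ci^7 - a^9 * c^4 * ci^8 - a^9 * c^5 * ci^9 - a^9 * c^6 * ci^10 - a^9 * c^7 * ci^11 + a^9 * b^2 * ci^4 + a^9 * b^2 * c * ci^5 + a^9 * b^2 * c^2 * ci^6 + a^9 * b^2 * c^3 * ci^7 + a^9 * b^2 * c^4 * ci^8 + a^9 * b^2 * c^5 * ci^9 + a^9 * b^2 * c^6 * ci^10 + a^9 * b^2 * c^7 * ci^11 - a^11 * ci^4 - a^11 * c * ci^5 - a^11 * c^2 * ci^6 - a^11 * c^3 * ci^7 - a^11 * c^4 * ci^8 - a^11 * c^5 * ci^9 - a^11 * c^6 * ci^10 - a^11 * c^7 * ci^11 + a^11 * b^2 * ci^4 + a^11 * b^2 * ci^8 + a^11 * b^2 * c * ci^5 + a^11 * b^2 * c * ci^9 + a^11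 * b^2 * c^2 * ci^6 + a^11 * b^2 * c^2 * ci^10 + a^11 * b^2 * c^3 * ci^7 + a^11 * b^2 * c^3 * ci^11 + a^11 * b^2 * c^4 * ci^8 + a^11 * b^2 * c^5 * ci^9 + a^11 * b^2 * c^6 * ci^10 + a^11 * b^2 * c^7 * ci^11 + a^13 * b^2 * ci^8 + a^13 * b^2 * c * ci^9 + a^13 * b^2 * c^2 * ci^10 + a^13 * b^2 * c^3 * ci^11 - a^13 * b^4 * ci^8 - a^13 * b^4 * c * ci^9 - a^13 * b^4 * c^2 * ci^10 - a^13 * b^4 * c^3 * ci^11 + a^15 * b^2 * ci^8 + a^15 * b^2 * c * ci^9 + a^15 * b^2 * c^2 * ci^10 + a^15 * b^2 * c^3 * ci^11 - a^15 * b^4 * ci^8 + a^15 * b^4 * ci^10 - a^15 * b^4 * c * ci^9 + a^15 * b^4 * c * ci^11 - a^15 * b^4 * c^2 * ci^10 - a^15 * b^4 * c^3 * ci^11) * hc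

lemma trefoil_coef2 {T : Type*} [CommRing T] (a ai b bi c ci : T)
    (ha : a * ai = 1) (hb : b * bi = 1) (hc : c * ci = 1) :
    -(a ^ 18 * (a ^ 2 * b) ^ 2 * (ai * ci) ^ 6 * (a ^ 4 * (ai * ci) ^ 2 - 1) * (a ^ 2 * (a ^ 2 * b) ^ 2 * (ai * ci) ^ 4 - 1) * (ai ^ 2 * bi ^ 2 * (ai ^ 2 * bi ^ 2)))
    = (a ^ 2) ^ 7 * bi ^ 2 * (ci ^ 2) ^ 6 * ((b ^ 2 - ai ^ 2 * (c ^ 2) ^ 2) * (c ^ 2 - a ^ 2)) := by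
  linear_combination (a^12 * bi^2 * c^6 * ci^12 - a^12 * b^2 * bi^4 * ci^6 + a^13 * ai * bi^2 * c^6 * ci^12 - a^13 * ai * b^2 * bi^4 * ci^6 - a^14 * bi^2 * c^4 * ci^12 + a^14 * b^2 * bi^4 * ci^8 + a^14 * b^4 * bi^4 * ci^10 - a^14 * ai^2 * b^2 * bi^4 * ci^6 - a^15 * ai * bi^2 * c^4 * ci^12 + a^15 * ai * b^2 * bi^4 * ci^8 + a^15 * ai * b^4 * bi^4 * ci^10 - a^15 * ai^3 * b^2 * bi^4 * ci^6 - a^16 * b^4 * bi^4 * ci^12 + a^16 * ai^2 * b^2 * bi^4 * ci^8 + a^16 * ai^2 * b^4 * bi^4 * ci^10 - a^16 * ai^4 * b^2 * bi^4 * ci^6 - a^17 * ai * b^4 * bi^4 * ci^12 + a^17 * ai^3 * b^2 * bi^4 * ci^8 + a^17 * ai^3 * b^4 * bi^4 * ci^10 - a^17 * ai^5 * b^2 * bi^4 * ci^6 - a^18 * ai^2 * b^4 * bi^4 * ci^12 + a^18 * ai^4 * b^2 * bi^4 * ci^8 + a^18 * ai^4 * b^4 * bi^4 * ci^10 - a^18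 * ai^6 * b^2 * bi^4 * ci^6 - a^19 * ai^3 * b^4 * bi^4 * ci^12 + a^19 * ai^5 * b^2 * bi^4 * ci^8 + a^19 * ai^5 * b^4 * bi^4 * ci^10 - a^19 * ai^7 * b^2 * bi^4 * ci^6 - a^20 * ai^4 * b^4 * bi^4 * ci^12 + a^20 * ai^6 * b^2 * bi^4 * ci^8 + a^20 * ai^6 * b^4 * bi^4 * ci^10 - a^20 * ai^8 * b^2 * bi^4 * ci^6 - a^21 * ai^5 * b^4 * bi^4 * ci^12 + a^21 * ai^7 * b^2 * bi^4 * ci^8 + a^21 * ai^7 * b^4 * bi^4 * ci^10 - a^21 * ai^9 * b^2 * bi^4 * ci^6 - a^22 * ai^6 * b^4 * bi^4 * ci^12 + a^22 * ai^8 * b^2 * bi^4 * ci^8 + a^22 * ai^8 * b^4 * bi^4 * ci^10 - a^23 * ai^7 * b^4 * bi^4 * ci^12 + a^23 * ai^9 * b^2 * bi^4 * ci^8 + a^23 * ai^9 * b^4 * bi^4 * ci^10 - a^24 * ai^8 * b^4 * bi^4 * ci^12 + a^24 * ai^10 * b^2 * bi^4 * ci^8 + a^24 * ai^10 * b^4 *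 bi^4 * ci^10 - a^25 * ai^9 * b^4 * bi^4 * ci^12 + a^25 * ai^11 * b^2 * bi^4 * ci^8 + a^25 * ai^11 * b^4 * bi^4 * ci^10 - a^26 * ai^10 * b^4 * bi^4 * ci^12 + a^26 * ai^12 * b^4 * bi^4 * ci^10 - a^27 * ai^11 * b^4 * bi^4 * ci^12 + a^27 * ai^13 * b^4 * bi^4 * ci^10 - a^28 * ai^12 * b^4 * bi^4 * ci^12 - a^29 * ai^13 * b^4 * bi^4 * ci^12 - a^30 * ai^14 * b^4 * bi^4 * ci^12 - a^31 * ai^15 * b^4 * bi^4 * ci^12) * ha + (-a^12 * bi^2 * ci^6 - a^12 * b * bi^3 * ci^6 + a^14 * ci^10 - a^14 * c^2 * ci^12 + a^14 * bi^2 * ci^8 + a^14 * b * bi * ci^10 - a^14 * b * bi * c^2 * ci^12 + a^14 * b * bi^3 * ci^8 + a^14 * b^2 * bi^2 * ci^10 + a^14 * b^3 * bi^3 * ci^10 - a^16 * b^2 * bi^2 * ci^12 - a^16 * b^3 * bi^3 * ci^12) * hb + (a^12 * bi^2 * ci^6 + a^12 * bi^2 * c * ci^7 + a^12 * bi^2 *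 c^2 * ci^8 + a^12 * bi^2 * c^3 * ci^9 + a^12 * bi^2 * c^4 * ci^10 + a^12 * bi^2 * c^5 * ci^11 - a^14 * ci^10 - a^14 * c * ci^11 - a^14 * bi^2 * ci^8 - a^14 * bi^2 * c * ci^9 - a^14 * bi^2 * c^2 * ci^10 - a^14 * bi^2 * c^3 * ci^11) * hc

lemma trefoil_aux {R : Type*} [Ring R] (A AI B BI C CI lm : R)
    (hA : ∀ r : R, A * r = r * A) (hAI : ∀ r : R, AI * r = r * AI)
    (hB : ∀ r : R, B * r = r * B) (hBI : ∀ r : R, BI * r = r * BI)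
    (hAAI : A * AI = 1) (hBBI : B * BI = 1) (hCCI : C * CI = 1) (hCIC : CI * C = 1) :
    (A ^ 2 * B) ^ 4 * ((A ^ 2 * B) ^ 2 * (AI * CI) ^ 2 - 1) * (A ^ 6 * (A ^ 2 * B) ^ 2 * (AI * CI) ^ 4 - 1)
      + A ^ 7 * (A ^ 4 * (A ^ 2 * B) ^ 2 * (AI * CI) ^ 4 - 1) * (A ^ 8 * (A ^ 2 * B) ^ 4 * (AI * CI) ^ 8 - A ^ 4 * (A ^ 2 * B) ^ 4 * (AI * CI) ^ 6 + A ^ 2 * (A ^ 2 * B) ^ 4 * (AI * CI) ^ 4 + (A ^ 2 * B) ^ 4 * (AI * CI) ^ 4 - A ^ 6 * (A ^ 2 * B) ^ 2 * (AI * CI) ^ 4 - A ^ 2 * (A ^ 2 * B) ^ 2 * (AI * CI) ^ 4 - (A ^ 2 * B) ^ 2 * (AI * CI) ^ 2 + 1) * (AI ^ 2 * BI ^ 2 * lm)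
      - A ^ 18 * (A ^ 2 * B) ^ 2 * (AI * CI) ^ 6 * (A ^ 4 * (AI * CI) ^ 2 - 1) * (A ^ 2 * (A ^ 2 * B) ^ 2 * (AI * CI) ^ 4 - 1) * (AI ^ 2 * BI ^ 2 * lm) ^ 2
    = (A ^ 2) ^ 7 * BI ^ 2 * (CI ^ 2) ^ 6 * (A ^ 2 * (B ^ 2) ^ 3 * (C ^ 2) ^ 3 * (B ^ 2 - (AI ^ 2) ^ 3 * (C ^ 2) ^ 2) * (B ^ 2 - AI ^ 2 * C ^ 2)
      + AI ^ 5 * (B ^ 2 - (AI ^ 2) ^ 2 * (C ^ 2) ^ 2) * (((A ^ 2) ^ 2 * (C ^ 2) ^ 2 + (A ^ 2) ^ 3 * (C ^ 2) ^ 2 - (A ^ 2) ^ 3 * C ^ 2 + (A ^ 2) ^ 4) * (B ^ 2) ^ 2 - (A ^ 2 * (C ^ 2) ^ 3 + (A ^ 2) ^ 3 * (C ^ 2) ^ 2 + A ^ 2 * (C ^ 2) ^ 2) * B ^ 2 + (C ^ 2) ^ 4) * lm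
      + (B ^ 2 - AI ^ 2 * (C ^ 2) ^ 2) * (C ^ 2 - A ^ 2) * lm ^ 2) := by
  have hu : ∀ r : R, AI ^ 2 * BI ^ 2 * r = r * (AI ^ 2 * BI ^ 2) := by
    have hA2 : ∀ r : R, AI ^ 2 * r = r * AI ^ 2 := fun r => by
      rw [pow_two, mul_assoc, hAI r, ← mul_assoc, hAI r, mul_assoc]
    have hB2 : ∀ r : R, BI ^ 2 * r = r * BI ^ 2 := fun r => by
      rw [pow_two, mul_assoc, hBI r, ← mul_assoc, hBI r, mul_assoc]
    intro r
    rw [mul_assoc, hB2 r, ← mul_assoc, hA2 r, mul_assoc]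
  have hsq : (AI ^ 2 * BI ^ 2 * lm) ^ 2 = AI ^ 2 * BI ^ 2 * (AI ^ 2 * BI ^ 2) * (lm * lm) := by
    calc (AI ^ 2 * BI ^ 2 * lm) ^ 2
        = AI ^ 2 * BI ^ 2 * (lm * (AI ^ 2 * BI ^ 2)) * lm := by rw [pow_two]; noncomm_ring
      _ = AI ^ 2 * BI ^ 2 * (AI ^ 2 * BI ^ 2 * lm) * lm := by rw [← hu lm]
      _ = AI ^ 2 * BI ^ 2 * (AI ^ 2 * BI ^ 2) * (lm * lm) := by noncomm_ring
  have hco : ∀ x ∈ ({A, AI, B, BI, C, CI} : Set R), ∀ y ∈ ({A, AI, B, BI, C, CI} : Set R),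
      x * y = y * x := by
    intro x hx y hy
    simp only [Set.mem_insert_iff, Set.mem_singleton_iff] at hx hy
    rcases hx with rfl | rfl | rfl | rfl | rfl | rfl <;>
      rcases hy with rfl | rfl | rfl | rfl | rfl | rfl <;>
      first
        | rfl
        | exact hA _ | exact hAI _ | exact hB _ | exact hBI _
        | exact (hA _).symm | exact (hAI _).symm | exact (hB _).symm | exact (hBI _).symm
        | exact hCCI.trans hCIC.symm | exact hCIC.trans hCCI.symm
  letI : CommRing (Subring.closure ({A, AI, B, BI, C, CI} : Set R)) :=
    Subring.closureCommRingOfComm hco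
  have memA : A ∈ Subring.closure ({A, AI, B, BI, C, CI} : Set R) :=
    Subring.subset_closure (by simp)
  have memAI : AI ∈ Subring.closure ({A, AI, B, BI, C, CI} : Set R) :=
    Subring.subset_closure (by simp)
  have memB : B ∈ Subring.closure ({A, AI, B, BI, C, CI} : Set R) :=
    Subring.subset_closure (by simp)
  have memBI : BI ∈ Subring.closure ({A, AI, B, BI, C, CI} : Set R) :=
    Subring.subset_closure (by simp)
  have memC : C ∈ Subring.closure ({A, AI, B, BI, C, CI} : Set R) :=
    Subring.subset_closure (by simp)
  have memCI : CI ∈ Subring.closure ({A, AI, B, BI, C, CI} : Set R) :=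
    Subring.subset_closure (by simp)
  have haT : (⟨A, memA⟩ * ⟨AI, memAI⟩ : Subring.closure ({A, AI, B, BI, C, CI} : Set R)) = 1 :=
    Subtype.ext hAAI
  have hbT : (⟨B, memB⟩ * ⟨BI, memBI⟩ : Subring.closure ({A, AI, B, BI, C, CI} : Set R)) = 1 :=
    Subtype.ext hBBI
  have hcT : (⟨C, memC⟩ * ⟨CI, memCI⟩ : Subring.closure ({A, AI, B, BI, C, CI} : Set R)) = 1 :=
    Subtype.ext hCCI
  have h0 := congrArg Subtype.val
    (trefoil_coef0 ⟨A, memA⟩ ⟨AI, memAI⟩ ⟨B, memB⟩ ⟨BI, memBI⟩ ⟨C, memC⟩ ⟨CI, memCI⟩ haT hbT hcT)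
  have h1 := congrArg Subtype.val
    (trefoil_coef1 ⟨A, memA⟩ ⟨AI, memAI⟩ ⟨B, memB⟩ ⟨BI, memBI⟩ ⟨C, memC⟩ ⟨CI, memCI⟩ haT hbT hcT)
  have h2 := congrArg Subtype.val
    (trefoil_coef2 ⟨A, memA⟩ ⟨AI, memAI⟩ ⟨B, memB⟩ ⟨BI, memBI⟩ ⟨C, memC⟩ ⟨CI, memCI⟩ haT hbT hcT)
  push_cast at h0 h1 h2
  have h0' : (A ^ 2 * B) ^ 4 * ((A ^ 2 * B) ^ 2 * (AI * CI) ^ 2 - 1) * (A ^ 6 * (A ^ 2 * B) ^ 2 * (AI * CI) ^ 4 - 1) = (A ^ 2) ^ 7 * BI ^ 2 * (CI ^ 2) ^ 6 * (A ^ 2 * (B ^ 2) ^ 3 * (C ^ 2) ^ 3 * (B ^ 2 - (AI ^ 2) ^ 3 * (C ^ 2) ^ 2) * (B ^ 2 - AI ^ 2 * C ^ 2)) := h0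
  have h1' : A ^ 7 * (A ^ 4 * (A ^ 2 * B) ^ 2 * (AI * CI) ^ 4 - 1) * (A ^ 8 * (A ^ 2 * B) ^ 4 * (AI * CI) ^ 8 - A ^ 4 * (A ^ 2 * B) ^ 4 * (AI * CI) ^ 6 + A ^ 2 * (A ^ 2 * B) ^ 4 * (AI * CI) ^ 4 + (A ^ 2 * B) ^ 4 * (AI * CI) ^ 4 - A ^ 6 * (A ^ 2 * B) ^ 2 * (AI * CI) ^ 4 - A ^ 2 * (A ^ 2 * B) ^ 2 * (AI * CI) ^ 4 - (A ^ 2 * B) ^ 2 * (AI * CI) ^ 2 + 1) * (AI ^ 2 * BI ^ 2) = (A ^ 2) ^ 7 * BI ^ 2 * (CI ^ 2) ^ 6 * (AI ^ 5 * (B ^ 2 - (AI ^ 2) ^ 2 * (C ^ 2) ^ 2) * (((A ^ 2) ^ 2 * (C ^ 2) ^ 2 + (A ^ 2) ^ 3 * (C ^ 2) ^ 2 - (A ^ 2) ^ 3 * C ^ 2 + (A ^ 2) ^ 4) * (B ^ 2) ^ 2 - (A ^ 2 * (C ^ 2) ^ 3 + (A ^ 2) ^ 3 * (C ^ 2) ^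 2 + A ^ 2 * (C ^ 2) ^ 2) * B ^ 2 + (C ^ 2) ^ 4)) := h1
  have h2' : -(A ^ 18 * (A ^ 2 * B) ^ 2 * (AI * CI) ^ 6 * (A ^ 4 * (AI * CI) ^ 2 - 1) * (A ^ 2 * (A ^ 2 * B) ^ 2 * (AI * CI) ^ 4 - 1) * (AI ^ 2 * BI ^ 2 * (AI ^ 2 * BI ^ 2))) = (A ^ 2) ^ 7 * BI ^ 2 * (CI ^ 2) ^ 6 * ((B ^ 2 - AI ^ 2 * (C ^ 2) ^ 2) * (C ^ 2 - A ^ 2)) := h2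
  trans ((A ^ 2 * B) ^ 4 * ((A ^ 2 * B) ^ 2 * (AI * CI) ^ 2 - 1) * (A ^ 6 * (A ^ 2 * B) ^ 2 * (AI * CI) ^ 4 - 1) + A ^ 7 * (A ^ 4 * (A ^ 2 * B) ^ 2 * (AI * CI) ^ 4 - 1) * (A ^ 8 * (A ^ 2 * B) ^ 4 * (AI * CI) ^ 8 - A ^ 4 * (A ^ 2 * B) ^ 4 * (AI * CI) ^ 6 + A ^ 2 * (A ^ 2 * B) ^ 4 * (AI * CI) ^ 4 + (A ^ 2 * B) ^ 4 * (AI * CI) ^ 4 - A ^ 6 * (A ^ 2 * B) ^ 2 * (AI * CI) ^ 4 - A ^ 2 * (A ^ 2 * B) ^ 2 * (AI * CI) ^ 4 - (A ^ 2 * B) ^ 2 * (AI * CI) ^ 2 + 1) * (AI ^ 2 * BI ^ 2) * lm + -(A ^ 18 * (A ^ 2 * B) ^ 2 * (AI * CI) ^ 6 * (A ^ 4 * (AI * CI) ^ 2 - 1) * (A ^ 2 * (A ^ 2 * B) ^ 2 * (AI * CI) ^ 4 - 1) * (AI ^ 2 * BI ^ 2 * (AI ^ 2 * BI ^ 2)))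 * (lm * lm))
  · rw [hsq]; noncomm_ring
  trans ((A ^ 2) ^ 7 * BI ^ 2 * (CI ^ 2) ^ 6 * (A ^ 2 * (B ^ 2) ^ 3 * (C ^ 2) ^ 3 * (B ^ 2 - (AI ^ 2) ^ 3 * (C ^ 2) ^ 2) * (B ^ 2 - AI ^ 2 * C ^ 2)) + (A ^ 2) ^ 7 * BI ^ 2 * (CI ^ 2) ^ 6 * (AI ^ 5 * (B ^ 2 - (AI ^ 2) ^ 2 * (C ^ 2) ^ 2) * (((A ^ 2) ^ 2 * (C ^ 2) ^ 2 + (A ^ 2) ^ 3 * (C ^ 2) ^ 2 - (A ^ 2) ^ 3 * C ^ 2 + (A ^ 2) ^ 4) * (B ^ 2) ^ 2 - (A ^ 2 * (C ^ 2) ^ 3 + (A ^ 2) ^ 3 * (C ^ 2) ^ 2 + A ^ 2 * (C ^ 2) ^ 2) * B ^ 2 + (C ^ 2) ^ 4)) * lm + (A ^ 2) ^ 7 * BI ^ 2 * (CI ^ 2) ^ 6 * ((B ^ 2 - AI ^ 2 * (C ^ 2) ^ 2) * (C ^ 2 - A ^ 2)) * (lm * lm))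
  · rw [h0', h1', h2']
  · noncomm_ring


/-- Comparison of the colored HOMFLY-PT recurrence polynomial `P_T(L,M,x,w)` for the
right-handed trefoil with its quantized augmentation polynomial `qAug_T(λ,μ,Q,q)` coming
from Legendrian SFT.  We work in a ring `R` with central invertible square roots `s` of
`q` and `P` of `Q`, and an invertible square root `m` of `μ` with `m * lam = s * lam * m`.
Substituting `L = q⁻¹Q⁻¹λ`, `M = s⁻¹m⁻¹`, `x = qP`, `w = s` one has
`P_T(q⁻¹Q⁻¹λ, s⁻¹m⁻¹, qP, s) = q⁷ Q⁻¹ μ⁻⁶ qAug_T(λ,μ,Q,q)`. -/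
theorem trefoil_homfly_recurrence_eq_quantized_augmentation
    (R : Type*) [Ring R] (s P lam m : Rˣ)
    (hs : ∀ r : R, (s : R) * r = r * (s : R))
    (hP : ∀ r : R, (P : R) * r = r * (P : R))
    (hcomm : (m : R) * (lam : R) = (s : R) * (lam : R) * (m : R))
    (q Q mu L M x w : Rˣ)
    (hq : q = s ^ 2) (hQ : Q = P ^ 2) (hmu : mu = m ^ 2)
    (hL : L = q⁻¹ * Q⁻¹ * lam) (hM : M = s⁻¹ * m⁻¹) (hx : x = q * P) (hw : w = s) :
    (x : R) ^ 4 * ((x : R) ^ 2 * (M : R) ^ 2 - 1) *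
        ((w : R) ^ 6 * (x : R) ^ 2 * (M : R) ^ 4 - 1)
      + (w : R) ^ 7 * ((w : R) ^ 4 * (x : R) ^ 2 * (M : R) ^ 4 - 1) *
          ((w : R) ^ 8 * (x : R) ^ 4 * (M : R) ^ 8
            - (w : R) ^ 4 * (x : R) ^ 4 * (M : R) ^ 6
            + (w : R) ^ 2 * (x : R) ^ 4 * (M : R) ^ 4
            + (x : R) ^ 4 * (M : R) ^ 4
            - (w : R) ^ 6 * (x : R) ^ 2 * (M : R) ^ 4
            - (w : R) ^ 2 * (x : R) ^ 2 * (M : R) ^ 4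
            - (x : R) ^ 2 * (M : R) ^ 2 + 1) * (L : R)
      - (w : R) ^ 18 * (x : R) ^ 2 * (M : R) ^ 6 * ((w : R) ^ 4 * (M : R) ^ 2 - 1) *
          ((w : R) ^ 2 * (x : R) ^ 2 * (M : R) ^ 4 - 1) * (L : R) ^ 2
    = (q : R) ^ 7 * ((Q⁻¹ : Rˣ) : R) * ((mu⁻¹ : Rˣ) : R) ^ 6 *
        ((q : R) * (Q : R) ^ 3 * (mu : R) ^ 3 *
            ((Q : R) - ((q⁻¹ : Rˣ) : R) ^ 3 * (mu : R) ^ 2) *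
            ((Q : R) - ((q⁻¹ : Rˣ) : R) * (mu : R))
          + ((s⁻¹ : Rˣ) : R) ^ 5 * ((Q : R) - ((q⁻¹ : Rˣ) : R) ^ 2 * (mu : R) ^ 2) *
              (((q : R) ^ 2 * (mu : R) ^ 2 + (q : R) ^ 3 * (mu : R) ^ 2
                  - (q : R) ^ 3 * (mu : R) + (q : R) ^ 4) * (Q : R) ^ 2
                - ((q : R) * (mu : R) ^ 3 + (q : R) ^ 3 * (mu : R) ^ 2
                    + (q : R) * (mu : R) ^ 2) * (Q : R)
                + (mu : R) ^ 4) * (lam : R)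
          + ((Q : R) - ((q⁻¹ : Rˣ) : R) * (mu : R) ^ 2) * ((mu : R) - (q : R)) *
              (lam : R) ^ 2) := by
  have hAIc : ∀ r : R, ((s⁻¹ : Rˣ) : R) * r = r * ((s⁻¹ : Rˣ) : R) := by
    intro r
    calc ((s⁻¹ : Rˣ) : R) * r
        = ((s⁻¹ : Rˣ) : R) * r * ((s : R) * ((s⁻¹ : Rˣ) : R)) := by rw [Units.mul_inv, mul_one]
      _ = ((s⁻¹ : Rˣ) : R) * ((s : R) * r) * ((s⁻¹ : Rˣ) : R) := by rw [hs r]; noncomm_ring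
      _ = r * ((s⁻¹ : Rˣ) : R) := by rw [← mul_assoc, Units.inv_mul, one_mul]
  have hBIc : ∀ r : R, ((P⁻¹ : Rˣ) : R) * r = r * ((P⁻¹ : Rˣ) : R) := by
    intro r
    calc ((P⁻¹ : Rˣ) : R) * r
        = ((P⁻¹ : Rˣ) : R) * r * ((P : R) * ((P⁻¹ : Rˣ) : R)) := by rw [Units.mul_inv, mul_one]
      _ = ((P⁻¹ : Rˣ) : R) * ((P : R) * r) * ((P⁻¹ : Rˣ) : R) := by rw [hP r]; noncomm_ring
      _ = r * ((P⁻¹ : Rˣ) : R) := by rw [← mul_assoc, Units.inv_mul, one_mul]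
  have hxv : (x : R) = (s : R) ^ 2 * (P : R) := by
    rw [hx, hq, Units.val_mul, Units.val_pow_eq_pow_val]
  have hMv : (M : R) = ((s⁻¹ : Rˣ) : R) * ((m⁻¹ : Rˣ) : R) := by rw [hM, Units.val_mul]
  have hwv : (w : R) = (s : R) := by rw [hw]
  have hLv : (L : R) = ((s⁻¹ : Rˣ) : R) ^ 2 * ((P⁻¹ : Rˣ) : R) ^ 2 * (lam : R) := by
    rw [hL, hq, hQ, ← inv_pow, ← inv_pow, Units.val_mul, Units.val_mul,
      Units.val_pow_eq_pow_val, Units.val_pow_eq_pow_val]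
  have hqv : (q : R) = (s : R) ^ 2 := by rw [hq, Units.val_pow_eq_pow_val]
  have hQv : (Q : R) = (P : R) ^ 2 := by rw [hQ, Units.val_pow_eq_pow_val]
  have hmuv : (mu : R) = (m : R) ^ 2 := by rw [hmu, Units.val_pow_eq_pow_val]
  have hqiv : ((q⁻¹ : Rˣ) : R) = ((s⁻¹ : Rˣ) : R) ^ 2 := by
    rw [hq, ← inv_pow, Units.val_pow_eq_pow_val]
  have hQiv : ((Q⁻¹ : Rˣ) : R) = ((P⁻¹ : Rˣ) : R) ^ 2 := by
    rw [hQ, ← inv_pow, Units.val_pow_eq_pow_val]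
  have hmuiv : ((mu⁻¹ : Rˣ) : R) = ((m⁻¹ : Rˣ) : R) ^ 2 := by
    rw [hmu, ← inv_pow, Units.val_pow_eq_pow_val]
  rw [hxv, hMv, hwv, hLv, hqv, hQv, hmuv, hqiv, hQiv, hmuiv]
  exact trefoil_aux (s : R) ((s⁻¹ : Rˣ) : R) (P : R) ((P⁻¹ : Rˣ) : R) (m : R) ((m⁻¹ : Rˣ) : R)
    (lam : R) hs hAIc hP hBIc (Units.mul_inv s) (Units.mul_inv P) (Units.mul_inv m)
    (Units.inv_mul m)
end

section
/- Let R be an associative unital ring containing central invertible elements q and Q and invertible elements λ and μ satisfying the commutation relation μ·λ = q·λ·μ. Then the following identity holds in R: (Q − q⁻¹μ²)·(Q − q⁻³μ²)·λ·(Q − μ²) − (Q²·(Q − q⁻³μ²) + q⁻¹λμ²·(Q − qμ²))·(−qQ² + Qμ + λμ − qλμ²) = q·Q³·(Q − q⁻³μ²)·(Q − q⁻¹μ) + q⁻⁴·(Q − q⁻²μ²)·((q²μ² + q³μ² − q³μ + q⁴)·Q² − (qμ³ + q³μ² + qμ²)·Q + μ⁴)·λ + q⁻⁶·μ³·(Q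 − q⁻¹μ²)·(μ − q)·λ². In particular, the left-hand side (the quantized augmentation polynomial of the right-handed trefoil in framing 3, obtained from the Legendrian SFT elimination) can be written in the normal form p₀ + p₁·λ + p₂·λ² with coefficients p₀ = qQ³(Q − q⁻³μ²)(Q − q⁻¹μ), p₁ = q⁻⁴(Q − q⁻²μ²)((q²μ² + q³μ² − q³μ + q⁴)Q² − (qμ³ + q³μ² + qμ²)Q + μ⁴), and p₂ = q⁻⁶μ³(Q − q⁻¹μ²)(μ − q) lying in the commutative subring generated by q, Q, μ and their inverses. -/
section TrefoilAux

variable {R : Type*} [Ring R]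

/-- The three commutative coefficient identities needed for the trefoil normal form,
proved in an arbitrary commutative ring with `xq * xi = 1`. -/
private theorem trefoil_comm {A : Type*} [CommRing A] (xq xQ xm xi : A)
    (hrel : xq * xi = 1) :
    (-((xQ ^ 2 * (xQ - xi ^ 3 * xm ^ 2)) * (-xq * xQ ^ 2 + xQ * xm))
        = xq * xQ ^ 3 * (xQ - xi ^ 3 * xm ^ 2) * (xQ - xi * xm))
    ∧ ((xQ - xi * xm ^ 2) * (xQ - xi ^ 3 * xm ^ 2) * (xQ - (xi * xm) * (xi * xm))
        - (xQ ^ 2 * (xQ - xi ^ 3 * xm ^ 2)) * (xi * xm - xq * ((xi * xm) * (xi * xm)))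
        - (xi * ((xi * xm) * (xi * xm) * (xQ - xq * ((xi * xm) * (xi * xm)))))
            * (-xq * xQ ^ 2 + xQ * (xi * xm))
        = xi ^ 4 * (xQ - xi ^ 2 * xm ^ 2) *
            ((xq ^ 2 * xm ^ 2 + xq ^ 3 * xm ^ 2 - xq ^ 3 * xm + xq ^ 4) * xQ ^ 2
              - (xq * xm ^ 3 + xq ^ 3 * xm ^ 2 + xq * xm ^ 2) * xQ + xm ^ 4))
    ∧ (-((xi * ((xi * xm) * (xi * xm) * (xQ - xq * ((xi * xm) * (xi * xm)))))
          * (xi * (xi * xm) - xq * (xi * (xi * xm) * (xi * (xi * xm)))))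
        = xi ^ 6 * xm ^ 3 * (xQ - xi * xm ^ 2) * (xm - xq)) := by
  refine ⟨?_, ?_, ?_⟩
  · linear_combination (xQ ^ 4 * xm - xi ^ 3 * xQ ^ 3 * xm ^ 3) * hrel
  · linear_combination (-xQ ^ 3 + xi * xQ ^ 2 * xm ^ 2 + xi * xQ ^ 3 * xm
      + xi ^ 2 * xQ ^ 2 * xm ^ 2 - xi ^ 3 * xQ * xm ^ 4 + xi ^ 3 * xQ ^ 2 * xm ^ 2
      - xi ^ 5 * xQ * xm ^ 4 - xq * xi * xQ ^ 3 + xq * xi ^ 2 * xQ ^ 2 * xm ^ 2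
      + xq * xi ^ 2 * xQ ^ 3 * xm - xq * xi ^ 2 * xQ ^ 3 * xm ^ 2
      + xq * xi ^ 3 * xQ ^ 2 * xm ^ 2 - xq * xi ^ 3 * xQ ^ 3 * xm ^ 2
      - xq * xi ^ 4 * xQ * xm ^ 4 - xq * xi ^ 4 * xQ ^ 2 * xm ^ 3
      + xq * xi ^ 5 * xQ ^ 2 * xm ^ 4 - xq ^ 2 * xi ^ 2 * xQ ^ 3
      + xq ^ 2 * xi ^ 3 * xQ ^ 2 * xm ^ 2 + xq ^ 2 * xi ^ 3 * xQ ^ 3 * xm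
      - xq ^ 2 * xi ^ 3 * xQ ^ 3 * xm ^ 2 + xq ^ 2 * xi ^ 4 * xQ ^ 2 * xm ^ 2
      - xq ^ 2 * xi ^ 5 * xQ * xm ^ 4 - xq ^ 2 * xi ^ 5 * xQ ^ 2 * xm ^ 3
      + xq ^ 2 * xi ^ 5 * xQ ^ 2 * xm ^ 4 - xq ^ 3 * xi ^ 3 * xQ ^ 3
      + xq ^ 3 * xi ^ 5 * xQ ^ 2 * xm ^ 2) * hrel
  · linear_combination (xi ^ 5 * xQ * xm ^ 3 + xi ^ 6 * xQ * xm ^ 4 - xi ^ 7 * xm ^ 6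
      - xq * xi ^ 8 * xm ^ 6) * hrel

/-- Expansion of a product of two degree-one polynomials in `lr`, pushing `lr` to the
right using the given commutation data. -/
private theorem trefoil_expand (B C D Dh E Eh lr : R)
    (hD : lr * D = Dh * lr) (hE : lr * E = Eh * lr) :
    (B + C * lr) * (D + E * lr)
      = B * D + (B * E) * lr + ((C * Dh) * lr + (C * Eh) * (lr * lr)) := by
  have e1 : (C * lr) * D = (C * Dh) * lr := by
    calc (C * lr) * D = C * (lr * D) := mul_assoc _ _ _
      _ = C * (Dh * lr) := by rw [hD]
      _ = (C * Dh) * lr := (mul_assoc _ _ _).symm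
  have e2 : (C * lr) * (E * lr) = (C * Eh) * (lr * lr) := by
    calc (C * lr) * (E * lr) = C * (lr * (E * lr)) := mul_assoc _ _ _
      _ = C * ((lr * E) * lr) := by rw [← mul_assoc lr E lr]
      _ = C * ((Eh * lr) * lr) := by rw [hE]
      _ = (C * Eh) * (lr * lr) := by rw [mul_assoc Eh lr lr, ← mul_assoc C Eh (lr * lr)]
  calc (B + C * lr) * (D + E * lr)
      = B * D + B * (E * lr) + ((C * lr) * D + (C * lr) * (E * lr)) := by noncomm_ring
    _ = B * D + (B * E) * lr + ((C * Dh) * lr + (C * Eh) * (lr * lr)) := by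
        rw [e1, e2, ← mul_assoc B E lr]

/-- Auxiliary: the quantum-torus normal-form identity, stated for ring elements. -/
private theorem trefoil_key (qr Qr lr mr qi : R)
    (hq : ∀ r : R, qr * r = r * qr) (hQ : ∀ r : R, Qr * r = r * Qr)
    (hqi : ∀ r : R, qi * r = r * qi)
    (hqqi : qr * qi = 1) (hqiq : qi * qr = 1)
    (hcomm : mr * lr = qr * lr * mr) :
    (Qr - qi * mr ^ 2) * (Qr - qi ^ 3 * mr ^ 2) * lr * (Qr - mr ^ 2)
      - (Qr ^ 2 * (Qr - qi ^ 3 * mr ^ 2) + qi * lr * mr ^ 2 * (Qr - qr * mr ^ 2)) *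
        (-qr * Qr ^ 2 + Qr * mr + lr * mr - qr * lr * mr ^ 2)
    = qr * Qr ^ 3 * (Qr - qi ^ 3 * mr ^ 2) * (Qr - qi * mr)
      + qi ^ 4 * (Qr - qi ^ 2 * mr ^ 2) *
        ((qr ^ 2 * mr ^ 2 + qr ^ 3 * mr ^ 2 - qr ^ 3 * mr + qr ^ 4) * Qr ^ 2
          - (qr * mr ^ 3 + qr ^ 3 * mr ^ 2 + qr * mr ^ 2) * Qr + mr ^ 4) * lr
      + qi ^ 6 * mr ^ 3 * (Qr - qi * mr ^ 2) * (mr - qr) * lr ^ 2 := by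
  -- push combinators
  have pushMul : ∀ {a b a' b' : R}, lr * a = a' * lr → lr * b = b' * lr →
      lr * (a * b) = a' * b' * lr := by
    intro a b a' b' ha hb
    calc lr * (a * b) = (lr * a) * b := (mul_assoc _ _ _).symm
      _ = (a' * lr) * b := by rw [ha]
      _ = a' * (lr * b) := mul_assoc _ _ _
      _ = a' * (b' * lr) := by rw [hb]
      _ = a' * b' * lr := (mul_assoc _ _ _).symm
  have pushAdd : ∀ {a b a' b' : R}, lr * a = a' * lr → lr * b = b' * lr →
      lr * (a + b) = (a' + b') * lr := by
    intro a b a' b' ha hb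
    rw [mul_add, ha, hb, ← add_mul]
  have pushSub : ∀ {a b a' b' : R}, lr * a = a' * lr → lr * b = b' * lr →
      lr * (a - b) = (a' - b') * lr := by
    intro a b a' b' ha hb
    rw [mul_sub, ha, hb, ← sub_mul]
  have pushNeg : ∀ {a a' : R}, lr * a = a' * lr → lr * (-a) = -a' * lr := by
    intro a a' ha
    rw [mul_neg, ha, neg_mul]
  have pushq : lr * qr = qr * lr := (hq lr).symm
  have pushQ : lr * Qr = Qr * lr := (hQ lr).symm
  have pushqi : lr * qi = qi * lr := (hqi lr).symm
  have pushMu : lr * mr = qi * mr * lr := by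
    rw [mul_assoc, hcomm, ← mul_assoc, ← mul_assoc, hqiq, one_mul]
  have pushMu2 : lr * mr ^ 2 = (qi * mr) * (qi * mr) * lr := by
    rw [sq]; exact pushMul pushMu pushMu
  have pushQ2 : lr * Qr ^ 2 = Qr ^ 2 * lr := by
    rw [sq]; exact pushMul pushQ pushQ
  -- pushed factors
  have P1 : lr * (Qr - mr ^ 2) = (Qr - (qi * mr) * (qi * mr)) * lr := pushSub pushQ pushMu2
  have P2 : lr * (mr ^ 2 * (Qr - qr * mr ^ 2))
      = (qi * mr) * (qi * mr) * (Qr - qr * ((qi * mr) * (qi * mr))) * lr :=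
    pushMul pushMu2 (pushSub pushQ (pushMul pushq pushMu2))
  have PD : lr * (-qr * Qr ^ 2 + Qr * mr) = (-qr * Qr ^ 2 + Qr * (qi * mr)) * lr :=
    pushAdd (pushMul (pushNeg pushq) pushQ2) (pushMul pushQ pushMu)
  have PE : lr * (qi * mr - qr * ((qi * mr) * (qi * mr)))
      = (qi * (qi * mr) - qr * (qi * (qi * mr) * (qi * (qi * mr)))) * lr :=
    pushSub (pushMul pushqi pushMu)
      (pushMul pushq (pushMul (pushMul pushqi pushMu) (pushMul pushqi pushMu)))
  -- commutative coefficient identities, proved in the commutative subring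
  -- generated by qr, Qr, mr, qi
  have hpair : ∀ x ∈ ({qr, Qr, mr, qi} : Set R), ∀ y ∈ ({qr, Qr, mr, qi} : Set R),
      x * y = y * x := by
    intro x hx y hy
    simp only [Set.mem_insert_iff, Set.mem_singleton_iff] at hx hy
    rcases hx with rfl | rfl | rfl | rfl <;> rcases hy with rfl | rfl | rfl | rfl <;>
      first
        | rfl
        | exact hq _
        | exact (hq _).symm
        | exact hQ _
        | exact (hQ _).symm
        | exact hqi _
        | exact (hqi _).symm
  letI : CommRing (Subring.closure ({qr, Qr, mr, qi} : Set R)) :=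
    Subring.closureCommRingOfComm hpair
  have mq : qr ∈ Subring.closure ({qr, Qr, mr, qi} : Set R) := Subring.subset_closure (by simp)
  have mQ : Qr ∈ Subring.closure ({qr, Qr, mr, qi} : Set R) := Subring.subset_closure (by simp)
  have mm : mr ∈ Subring.closure ({qr, Qr, mr, qi} : Set R) := Subring.subset_closure (by simp)
  have mi : qi ∈ Subring.closure ({qr, Qr, mr, qi} : Set R) := Subring.subset_closure (by simp)
  obtain ⟨hc0', hc1', hc2'⟩ := trefoil_comm
    (A := Subring.closure ({qr, Qr, mr, qi} : Set R))
    ⟨qr, mq⟩ ⟨Qr, mQ⟩ ⟨mr, mm⟩ ⟨qi, mi⟩ (Subtype.ext hqqi)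
  have hc0 : -((Qr ^ 2 * (Qr - qi ^ 3 * mr ^ 2)) * (-qr * Qr ^ 2 + Qr * mr))
      = qr * Qr ^ 3 * (Qr - qi ^ 3 * mr ^ 2) * (Qr - qi * mr) :=
    congrArg Subtype.val hc0'
  have hc1 : (Qr - qi * mr ^ 2) * (Qr - qi ^ 3 * mr ^ 2) * (Qr - (qi * mr) * (qi * mr))
      - (Qr ^ 2 * (Qr - qi ^ 3 * mr ^ 2)) * (qi * mr - qr * ((qi * mr) * (qi * mr)))
      - (qi * ((qi * mr) * (qi * mr) * (Qr - qr * ((qi * mr) * (qi * mr)))))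
          * (-qr * Qr ^ 2 + Qr * (qi * mr))
      = qi ^ 4 * (Qr - qi ^ 2 * mr ^ 2) *
          ((qr ^ 2 * mr ^ 2 + qr ^ 3 * mr ^ 2 - qr ^ 3 * mr + qr ^ 4) * Qr ^ 2
            - (qr * mr ^ 3 + qr ^ 3 * mr ^ 2 + qr * mr ^ 2) * Qr + mr ^ 4) :=
    congrArg Subtype.val hc1'
  have hc2 : -((qi * ((qi * mr) * (qi * mr) * (Qr - qr * ((qi * mr) * (qi * mr)))))
        * (qi * (qi * mr) - qr * (qi * (qi * mr) * (qi * (qi * mr)))))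
      = qi ^ 6 * mr ^ 3 * (Qr - qi * mr ^ 2) * (mr - qr) :=
    congrArg Subtype.val hc2'
  -- assemble
  have hT1 : (Qr - qi * mr ^ 2) * (Qr - qi ^ 3 * mr ^ 2) * lr * (Qr - mr ^ 2)
      = (Qr - qi * mr ^ 2) * (Qr - qi ^ 3 * mr ^ 2) * (Qr - (qi * mr) * (qi * mr)) * lr := by
    calc (Qr - qi * mr ^ 2) * (Qr - qi ^ 3 * mr ^ 2) * lr * (Qr - mr ^ 2)
        = (Qr - qi * mr ^ 2) * (Qr - qi ^ 3 * mr ^ 2) * (lr * (Qr - mr ^ 2)) :=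
          mul_assoc _ _ _
      _ = (Qr - qi * mr ^ 2) * (Qr - qi ^ 3 * mr ^ 2) * ((Qr - (qi * mr) * (qi * mr)) * lr) := by
          rw [P1]
      _ = (Qr - qi * mr ^ 2) * (Qr - qi ^ 3 * mr ^ 2) * (Qr - (qi * mr) * (qi * mr)) * lr :=
          (mul_assoc _ _ _).symm
  have h3 : qi * lr * mr ^ 2 * (Qr - qr * mr ^ 2)
      = qi * ((qi * mr) * (qi * mr) * (Qr - qr * ((qi * mr) * (qi * mr)))) * lr := by
    calc qi * lr * mr ^ 2 * (Qr - qr * mr ^ 2)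
        = lr * qi * mr ^ 2 * (Qr - qr * mr ^ 2) := by rw [hqi lr]
      _ = lr * (qi * (mr ^ 2 * (Qr - qr * mr ^ 2))) := by rw [mul_assoc, mul_assoc]
      _ = qi * ((qi * mr) * (qi * mr) * (Qr - qr * ((qi * mr) * (qi * mr)))) * lr :=
          pushMul pushqi P2
  have h4 : qr * lr * mr ^ 2 = qr * ((qi * mr) * (qi * mr)) * lr := by
    calc qr * lr * mr ^ 2 = lr * qr * mr ^ 2 := by rw [hq lr]
      _ = lr * (qr * mr ^ 2) := mul_assoc _ _ _
      _ = qr * ((qi * mr) * (qi * mr)) * lr := pushMul pushq pushMu2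
  have hF : -qr * Qr ^ 2 + Qr * mr + lr * mr - qr * lr * mr ^ 2
      = (-qr * Qr ^ 2 + Qr * mr) + (qi * mr - qr * ((qi * mr) * (qi * mr))) * lr := by
    rw [pushMu, h4]; noncomm_ring
  have hExp := trefoil_expand
    (Qr ^ 2 * (Qr - qi ^ 3 * mr ^ 2))
    (qi * ((qi * mr) * (qi * mr) * (Qr - qr * ((qi * mr) * (qi * mr)))))
    (-qr * Qr ^ 2 + Qr * mr)
    (-qr * Qr ^ 2 + Qr * (qi * mr))
    (qi * mr - qr * ((qi * mr) * (qi * mr)))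
    (qi * (qi * mr) - qr * (qi * (qi * mr) * (qi * (qi * mr))))
    lr PD PE
  rw [hT1, h3, hF, hExp, ← hc0, ← hc1, ← hc2]
  noncomm_ring

end TrefoilAux

/-- Normal form of the quantized augmentation polynomial of the right-handed trefoil in
framing 3, obtained by noncommutative elimination in the quantum torus: central invertible
`q`, `Q`, invertible `lam`, `mu` with `mu * lam = q * lam * mu`.  The left-hand side equals
`p₀ + p₁ * lam + p₂ * lam ^ 2` with coefficients `p₀, p₁, p₂` lying in the commutative
subring generated by `q, Q, mu` and their inverses. -/
theorem trefoil_framing3_quantized_augmentation_normal_form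
    (R : Type*) [Ring R] (q Q lam mu : Rˣ)
    (hq : ∀ r : R, (q : R) * r = r * (q : R))
    (hQ : ∀ r : R, (Q : R) * r = r * (Q : R))
    (hcomm : (mu : R) * (lam : R) = (q : R) * (lam : R) * (mu : R)) :
    let qi : R := ((q⁻¹ : Rˣ) : R)
    let p₀ : R := (q : R) * (Q : R) ^ 3 * ((Q : R) - qi ^ 3 * (mu : R) ^ 2) *
      ((Q : R) - qi * (mu : R))
    let p₁ : R := qi ^ 4 * ((Q : R) - qi ^ 2 * (mu : R) ^ 2) *
      (((q : R) ^ 2 * (mu : R) ^ 2 + (q : R) ^ 3 * (mu : R) ^ 2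
          - (q : R) ^ 3 * (mu : R) + (q : R) ^ 4) * (Q : R) ^ 2
        - ((q : R) * (mu : R) ^ 3 + (q : R) ^ 3 * (mu : R) ^ 2
            + (q : R) * (mu : R) ^ 2) * (Q : R)
        + (mu : R) ^ 4)
    let p₂ : R := qi ^ 6 * (mu : R) ^ 3 * ((Q : R) - qi * (mu : R) ^ 2) *
      ((mu : R) - (q : R))
    let S : Subring R := Subring.closure
      {(q : R), (Q : R), (mu : R), ((q⁻¹ : Rˣ) : R), ((Q⁻¹ : Rˣ) : R), ((mu⁻¹ : Rˣ) : R)}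
    (((Q : R) - qi * (mu : R) ^ 2) * ((Q : R) - qi ^ 3 * (mu : R) ^ 2) * (lam : R) *
          ((Q : R) - (mu : R) ^ 2)
        - ((Q : R) ^ 2 * ((Q : R) - qi ^ 3 * (mu : R) ^ 2)
            + qi * (lam : R) * (mu : R) ^ 2 * ((Q : R) - (q : R) * (mu : R) ^ 2)) *
          (-(q : R) * (Q : R) ^ 2 + (Q : R) * (mu : R) + (lam : R) * (mu : R)
            - (q : R) * (lam : R) * (mu : R) ^ 2)
      = p₀ + p₁ * (lam : R) + p₂ * (lam : R) ^ 2)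
    ∧ p₀ ∈ S ∧ p₁ ∈ S ∧ p₂ ∈ S := by
  intro qi p₀ p₁ p₂ S
  have hqqi : (q : R) * ((q⁻¹ : Rˣ) : R) = 1 := Units.mul_inv q
  have hqiq : ((q⁻¹ : Rˣ) : R) * (q : R) = 1 := Units.inv_mul q
  have hqi : ∀ r : R, ((q⁻¹ : Rˣ) : R) * r = r * ((q⁻¹ : Rˣ) : R) := by
    intro r
    calc ((q⁻¹ : Rˣ) : R) * r
        = ((q⁻¹ : Rˣ) : R) * (r * ((q : R) * ((q⁻¹ : Rˣ) : R))) := by rw [hqqi, mul_one]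
      _ = ((q⁻¹ : Rˣ) : R) * (((q : R) * r) * ((q⁻¹ : Rˣ) : R)) := by rw [← mul_assoc r, ← hq r]
      _ = (((q⁻¹ : Rˣ) : R) * (q : R)) * (r * ((q⁻¹ : Rˣ) : R)) := by
          simp only [mul_assoc]
      _ = r * ((q⁻¹ : Rˣ) : R) := by rw [hqiq, one_mul]
  refine ⟨?_, ?_, ?_, ?_⟩
  · exact trefoil_key (q : R) (Q : R) (lam : R) (mu : R) ((q⁻¹ : Rˣ) : R)
      hq hQ hqi hqqi hqiq hcomm
  · show (q : R) * (Q : R) ^ 3 * ((Q : R) - ((q⁻¹ : Rˣ) : R) ^ 3 * (mu : R) ^ 2) *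
      ((Q : R) - ((q⁻¹ : Rˣ) : R) * (mu : R)) ∈ Subring.closure
      {(q : R), (Q : R), (mu : R), ((q⁻¹ : Rˣ) : R), ((Q⁻¹ : Rˣ) : R), ((mu⁻¹ : Rˣ) : R)}
    repeat'
      first
        | apply Subring.mul_mem
        | apply Subring.add_mem
        | apply Subring.sub_mem
        | apply Subring.pow_mem
        | apply Subring.neg_mem
        | (apply Subring.subset_closure; simp)
  · show ((q⁻¹ : Rˣ) : R) ^ 4 * ((Q : R) - ((q⁻¹ : Rˣ) : R) ^ 2 * (mu : R) ^ 2) *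
      (((q : R) ^ 2 * (mu : R) ^ 2 + (q : R) ^ 3 * (mu : R) ^ 2
          - (q : R) ^ 3 * (mu : R) + (q : R) ^ 4) * (Q : R) ^ 2
        - ((q : R) * (mu : R) ^ 3 + (q : R) ^ 3 * (mu : R) ^ 2
            + (q : R) * (mu : R) ^ 2) * (Q : R)
        + (mu : R) ^ 4) ∈ Subring.closure
      {(q : R), (Q : R), (mu : R), ((q⁻¹ : Rˣ) : R), ((Q⁻¹ : Rˣ) : R), ((mu⁻¹ : Rˣ) : R)}
    repeat'
      first
        | apply Subring.mul_mem
        | apply Subring.add_mem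
        | apply Subring.sub_mem
        | apply Subring.pow_mem
        | apply Subring.neg_mem
        | (apply Subring.subset_closure; simp)
  · show ((q⁻¹ : Rˣ) : R) ^ 6 * (mu : R) ^ 3 * ((Q : R) - ((q⁻¹ : Rˣ) : R) * (mu : R) ^ 2) *
      ((mu : R) - (q : R)) ∈ Subring.closure
      {(q : R), (Q : R), (mu : R), ((q⁻¹ : Rˣ) : R), ((Q⁻¹ : Rˣ) : R), ((mu⁻¹ : Rˣ) : R)}
    repeat'
      first
        | apply Subring.mul_mem
        | apply Subring.add_mem
        | apply Subring.sub_mem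
        | apply Subring.pow_mem
        | apply Subring.neg_mem
        | (apply Subring.subset_closure; simp)
end

section
/- Let R be an associative unital ring containing central invertible elements q and Q and invertible elements λ and μ satisfying the commutation relation μ·λ = q·λ·μ. Then the following identity holds in R: (Q − q⁻¹μ²)·(Q − q⁻³μ²)·(Q² + q⁻¹λμ²) = (Q²·(Q − q⁻³μ²) + q⁻¹λμ²·(Q − qμ²))·(Q − q⁻¹μ²). -/
/-- The key algebraic identity in the quantum torus (central invertible `q`, `Q`,
invertible `lam`, `mu` with `mu * lam = q * lam * mu`) used to eliminate the
operator `∂_{a21}` in the Legendrian SFT computation for the right-handed trefoil. -/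
theorem quantum_torus_trefoil_elimination_identity
    (R : Type*) [Ring R] (q Q lam mu : Rˣ)
    (hq : ∀ r : R, (q : R) * r = r * (q : R))
    (hQ : ∀ r : R, (Q : R) * r = r * (Q : R))
    (hcomm : (mu : R) * (lam : R) = (q : R) * (lam : R) * (mu : R)) :
    ((Q : R) - ((q⁻¹ : Rˣ) : R) * (mu : R) ^ 2) *
        ((Q : R) - ((q⁻¹ : Rˣ) : R) ^ 3 * (mu : R) ^ 2) *
        ((Q : R) ^ 2 + ((q⁻¹ : Rˣ) : R) * (lam : R) * (mu : R) ^ 2)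
      = ((Q : R) ^ 2 * ((Q : R) - ((q⁻¹ : Rˣ) : R) ^ 3 * (mu : R) ^ 2)
            + ((q⁻¹ : Rˣ) : R) * (lam : R) * (mu : R) ^ 2 *
              ((Q : R) - (q : R) * (mu : R) ^ 2)) *
          ((Q : R) - ((q⁻¹ : Rˣ) : R) * (mu : R) ^ 2) := by
  set c : R := ((q⁻¹ : Rˣ) : R) with hc
  have hqc : (q : R) * c = 1 := by rw [hc]; exact_mod_cast q.mul_inv
  have hcq : c * (q : R) = 1 := by rw [hc]; exact_mod_cast q.inv_mul
  have hcent : ∀ r : R, c * r = r * c := by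
    intro r
    calc c * r = c * r * ((q:R) * c) := by rw [hqc, mul_one]
    _ = c * (r * (q:R)) * c := by noncomm_ring
    _ = c * ((q:R) * r) * c := by rw [← hq]
    _ = (c * (q:R)) * r * c := by noncomm_ring
    _ = r * c := by rw [hcq, one_mul]
  -- cancellations
  have e1 : ∀ s : R, (q:R) * (c * s) = s := by intro s; rw [← mul_assoc, hqc, one_mul]
  have e2 : ∀ s : R, c * ((q:R) * s) = s := by intro s; rw [← mul_assoc, hcq, one_mul]
  -- ordered swaps (atom order: q, c, Q, lam, mu)
  have w1 : ∀ s : R, (Q:R) * ((q:R) * s) = (q:R) * ((Q:R) * s) := by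
    intro s; rw [← mul_assoc, ← hq, mul_assoc]
  have w1' : (Q:R) * (q:R) = (q:R) * (Q:R) := (hq _).symm
  have w2 : ∀ s : R, (Q:R) * (c * s) = c * ((Q:R) * s) := by
    intro s; rw [← mul_assoc, ← hcent, mul_assoc]
  have w2' : (Q:R) * c = c * (Q:R) := (hcent _).symm
  have w3 : ∀ s : R, (lam:R) * ((q:R) * s) = (q:R) * ((lam:R) * s) := by
    intro s; rw [← mul_assoc, ← hq, mul_assoc]
  have w3' : (lam:R) * (q:R) = (q:R) * (lam:R) := (hq _).symm
  have w4 : ∀ s : R, (lam:R) * (c * s) = c * ((lam:R) * s) := by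
    intro s; rw [← mul_assoc, ← hcent, mul_assoc]
  have w4' : (lam:R) * c = c * (lam:R) := (hcent _).symm
  have w5 : ∀ s : R, (lam:R) * ((Q:R) * s) = (Q:R) * ((lam:R) * s) := by
    intro s; rw [← mul_assoc, ← hQ, mul_assoc]
  have w5' : (lam:R) * (Q:R) = (Q:R) * (lam:R) := (hQ _).symm
  have w6 : ∀ s : R, (mu:R) * ((q:R) * s) = (q:R) * ((mu:R) * s) := by
    intro s; rw [← mul_assoc, ← hq, mul_assoc]
  have w6' : (mu:R) * (q:R) = (q:R) * (mu:R) := (hq _).symm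
  have w7 : ∀ s : R, (mu:R) * (c * s) = c * ((mu:R) * s) := by
    intro s; rw [← mul_assoc, ← hcent, mul_assoc]
  have w7' : (mu:R) * c = c * (mu:R) := (hcent _).symm
  have w8 : ∀ s : R, (mu:R) * ((Q:R) * s) = (Q:R) * ((mu:R) * s) := by
    intro s; rw [← mul_assoc, ← hQ, mul_assoc]
  have w8' : (mu:R) * (Q:R) = (Q:R) * (mu:R) := (hQ _).symm
  have w9 : ∀ s : R, (mu:R) * ((lam:R) * s) = (q:R) * ((lam:R) * ((mu:R) * s)) := by
    intro s; rw [← mul_assoc, hcomm]; noncomm_ring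
  have w9' : (mu:R) * (lam:R) = (q:R) * ((lam:R) * (mu:R)) := by
    rw [hcomm, mul_assoc]
  simp only [pow_succ, pow_zero, one_mul, mul_add, add_mul, mul_sub, sub_mul, mul_assoc,
    e1, e2, w1, w1', w2, w2', w3, w3', w4, w4', w5, w5', w6, w6', w7, w7', w8, w8', w9, w9']
  abel
end

section
/- In the commutative polynomial ring ℤ[λ, μ, Q, a₁₂, a₂₁], define d_b := a₁₂ − λ·a₂₁, d_{c21} := Q − μ + λμ·a₂₁ + Q·a₁₂·a₂₁, d_{c22} := μ − 1 − Q·a₂₁ + μ·a₁₂·a₂₁, and Aug_T(λ,μ,Q) := (μ⁴ − μ³)·λ² + (μ⁴ − Qμ³ + 2Q²μ² − 2Qμ² − Q²μ + Q²)·λ + (Q⁴ − Q³μ). Then the following polynomial identity holds: (λ·(Q − μ²) − (Q² + λμ²)·a₁₂)·(μ·d_{c21} − Q·d_{c22}) + (Q² + λμ²)·(Q − μ²)·d_b + (Q² + λμ²)·(Q·d_{c21} + λμ·d_{c22}) = Aug_T(λ,μ,Q). In particular, Aug_T(λ,μ,Q) lies in the ideal generated by d_b, d_{c21}, d_{c22}.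 -/
open MvPolynomial in
/-- Elimination-theory identity deriving the (unnormalized) augmentation polynomial
`Aug_T` of the right-handed trefoil from the differentials `d_b`, `d_{c21}`, `d_{c22}`
of the degree-1 Reeb chords in the abelianized Chekanov–Eliashberg dg-algebra, in the
commutative polynomial ring `ℤ[λ, μ, Q, a₁₂, a₂₁]`.  In particular `Aug_T` lies in the
ideal generated by `d_b`, `d_{c21}`, `d_{c22}`. -/
theorem trefoil_augmentation_polynomial_elimination :
    let lam : MvPolynomial (Fin 5) ℤ := X 0
    let mu : MvPolynomial (Fin 5) ℤ := X 1
    let Q : MvPolynomial (Fin 5) ℤ := X 2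
    let a12 : MvPolynomial (Fin 5) ℤ := X 3
    let a21 : MvPolynomial (Fin 5) ℤ := X 4
    let db : MvPolynomial (Fin 5) ℤ := a12 - lam * a21
    let dc21 : MvPolynomial (Fin 5) ℤ := Q - mu + lam * mu * a21 + Q * a12 * a21
    let dc22 : MvPolynomial (Fin 5) ℤ := mu - 1 - Q * a21 + mu * a12 * a21
    let AugT : MvPolynomial (Fin 5) ℤ :=
      (mu ^ 4 - mu ^ 3) * lam ^ 2
        + (mu ^ 4 - Q * mu ^ 3 + 2 * Q ^ 2 * mu ^ 2 - 2 * Q * mu ^ 2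
            - Q ^ 2 * mu + Q ^ 2) * lam
        + (Q ^ 4 - Q ^ 3 * mu)
    ((lam * (Q - mu ^ 2) - (Q ^ 2 + lam * mu ^ 2) * a12) * (mu * dc21 - Q * dc22)
        + (Q ^ 2 + lam * mu ^ 2) * (Q - mu ^ 2) * db
        + (Q ^ 2 + lam * mu ^ 2) * (Q * dc21 + lam * mu * dc22) = AugT)
    ∧ AugT ∈ Ideal.span {db, dc21, dc22} := by
  intro lam mu Q a12 a21 db dc21 dc22 AugT
  have h : (lam * (Q - mu ^ 2) - (Q ^ 2 + lam * mu ^ 2) * a12) * (mu * dc21 - Q * dc22)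
        + (Q ^ 2 + lam * mu ^ 2) * (Q - mu ^ 2) * db
        + (Q ^ 2 + lam * mu ^ 2) * (Q * dc21 + lam * mu * dc22) = AugT := by
    simp only [lam, mu, Q, a12, a21, db, dc21, dc22, AugT]; ring
  refine ⟨h, ?_⟩
  rw [← h]
  have hdb : db ∈ Ideal.span {db, dc21, dc22} :=
    Ideal.subset_span (by simp)
  have h21 : dc21 ∈ Ideal.span {db, dc21, dc22} :=
    Ideal.subset_span (by simp)
  have h22 : dc22 ∈ Ideal.span {db, dc21, dc22} :=
    Ideal.subset_span (by simp)
  exact add_mem (add_mem (Ideal.mul_mem_left _ _ (sub_mem (Ideal.mul_mem_left _ _ h21) (Ideal.mul_mem_left _ _ h22))) (Ideal.mul_mem_left _ _ hdb)) (Ideal.mul_mem_left _ _ (add_mem (Ideal.mul_mem_left _ _ h21) (Ideal.mul_mem_left _ _ h22)))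
end

section
/- Let λ, μ, Q ∈ ℂ with λ ≠ 0, and suppose a₁₂, a₂₁ ∈ ℂ satisfy the four equations a₁₂ − λ·a₂₁ = 0, λμ − λ − (2Q − μ)·a₁₂ − Q·a₁₂²·a₂₁ = 0, Q − μ + λμ·a₂₁ + Q·a₁₂·a₂₁ = 0, and μ − 1 − Q·a₂₁ + μ·a₁₂·a₂₁ = 0. Then Aug_T(λ,μ,Q) = 0, where Aug_T(λ,μ,Q) := (μ⁴ − μ³)·λ² + (μ⁴ − Qμ³ + 2Q²μ² − 2Qμ² − Q²μ + Q²)·λ + (Q⁴ − Q³μ). -/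
/-- The augmentation variety of the right-handed trefoil is contained in the zero locus
of its (unnormalized) augmentation polynomial: if `λ ≠ 0` and `a₁₂, a₂₁ ∈ ℂ` solve the
four equations coming from the differentials of the degree-1 Reeb chords, then
`Aug_T(λ,μ,Q) = 0`. -/
theorem trefoil_augmentation_implies_polynomial_vanishes
    (lam mu Q a12 a21 : ℂ) (hlam : lam ≠ 0)
    (h1 : a12 - lam * a21 = 0)
    (h2 : lam * mu - lam - (2 * Q - mu) * a12 - Q * a12 ^ 2 * a21 = 0)
    (h3 : Q - mu + lam * mu * a21 + Q * a12 * a21 = 0)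
    (h4 : mu - 1 - Q * a21 + mu * a12 * a21 = 0) :
    (mu ^ 4 - mu ^ 3) * lam ^ 2
      + (mu ^ 4 - Q * mu ^ 3 + 2 * Q ^ 2 * mu ^ 2 - 2 * Q * mu ^ 2
          - Q ^ 2 * mu + Q ^ 2) * lam
      + (Q ^ 4 - Q ^ 3 * mu) = 0 := by
  by_cases hmu : mu = 0
  · subst hmu
    have hQa : Q * a21 = -1 := by linear_combination -h4
    have hQ : Q ≠ 0 := by rintro rfl; simp at hQa
    have h12 : a12 * a21 = -1 :=
      mul_left_cancel₀ hQ (by linear_combination h3 : Q * (a12 * a21) = Q * (-1))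
    have hl : lam = -Q * a12 := by linear_combination -h2 - a12 * h3
    have h5 : lam * a21 = Q := by linear_combination a21 * hl - Q * h12
    have hQ2 : Q ^ 2 = -lam := by linear_combination lam * hQa - Q * h5
    linear_combination Q ^ 2 * hQ2
  · have key : mu * ((mu ^ 4 - mu ^ 3) * lam ^ 2
      + (mu ^ 4 - Q * mu ^ 3 + 2 * Q ^ 2 * mu ^ 2 - 2 * Q * mu ^ 2
          - Q ^ 2 * mu + Q ^ 2) * lam
      + (Q ^ 4 - Q ^ 3 * mu)) = 0 := by
      linear_combination
        ((Q ^ 2 + lam * mu ^ 2) ^ 2) * (h4 - mu * a21 * h1)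
          - (mu * (h3 - Q * a21 * h1) - Q * (h4 - mu * a21 * h1))
            * (mu * lam * ((Q ^ 2 + lam * mu ^ 2) * a21 + (mu ^ 2 - Q))
                - Q * (Q ^ 2 + lam * mu ^ 2))
    exact (mul_eq_zero.mp key).resolve_left hmu
end

section
/- Let λ, μ, Q ∈ ℂ satisfy Aug_T(λ,μ,Q) = 0 and Q² + λμ² ≠ 0, where Aug_T(λ,μ,Q) := (μ⁴ − μ³)·λ² + (μ⁴ − Qμ³ + 2Q²μ² − 2Qμ² − Q²μ + Q²)·λ + (Q⁴ − Q³μ). Then there exist a₁₂, a₂₁ ∈ ℂ (explicitly, a₂₁ = (μ² − Q)/(Q² + λμ²) and a₁₂ = λ·a₂₁) satisfying the four equations a₁₂ − λ·a₂₁ = 0, λμ − λ − (2Q − μ)·a₁₂ − Q·a₁₂²·a₂₁ = 0, Q − μ + λμ·a₂₁ + Q·a₁₂·a₂₁ = 0, and μ − 1 − Q·a₂₁ + μ·a₁₂·a₂₁ = 0. -/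
/-! Put `d = Q² + λμ²`, `a₂₁ = (μ² − Q)/d` and `a₁₂ = λ·a₂₁`, so that `λ·∂b₁₂` vanishes
identically. Clearing the denominators `d³`, `d²`, `d²`, the differentials of `c₁₁`, `c₂₁`, `c₂₂`
become polynomial multiples of `Aug_T`, hence vanish on its zero locus. -/

section TrefoilAugmentation

variable {K : Type*} [Field K] {lam mu Q : K}

def trefoilAug (lam mu Q : K) : K :=
  (mu ^ 4 - mu ^ 3) * lam ^ 2
    + (mu ^ 4 - Q * mu ^ 3 + 2 * Q ^ 2 * mu ^ 2 - 2 * Q * mu ^ 2 - Q ^ 2 * mu + Q ^ 2) * lam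
    + (Q ^ 4 - Q ^ 3 * mu)

def trefoilA21 (lam mu Q : K) : K := (mu ^ 2 - Q) / (Q ^ 2 + lam * mu ^ 2)

variable (hAug : trefoilAug lam mu Q = 0) (hden : Q ^ 2 + lam * mu ^ 2 ≠ 0)
include hAug hden

theorem trefoil_differential_c11_eq_zero :
    lam * mu - lam - (2 * Q - mu) * (lam * trefoilA21 lam mu Q)
      - Q * (lam * trefoilA21 lam mu Q) ^ 2 * trefoilA21 lam mu Q = 0 := by
  unfold trefoilA21 trefoilAug at *
  field_simp
  linear_combination (lam ^ 2 * mu ^ 3 + lam * (Q ^ 2 + mu * Q ^ 2 - mu ^ 2 * Q)) * hAug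

theorem trefoil_differential_c21_eq_zero :
    Q - mu + lam * mu * trefoilA21 lam mu Q
      + Q * (lam * trefoilA21 lam mu Q) * trefoilA21 lam mu Q = 0 := by
  unfold trefoilA21 trefoilAug at *
  have hden' : Q ^ 2 + mu ^ 2 * lam ≠ 0 := by rwa [mul_comm]
  field_simp
  linear_combination Q * hAug

theorem trefoil_differential_c22_eq_zero :
    mu - 1 - Q * trefoilA21 lam mu Q
      + mu * (lam * trefoilA21 lam mu Q) * trefoilA21 lam mu Q = 0 := by
  unfold trefoilA21 trefoilAug at *
  have hden' : Q ^ 2 + mu ^ 2 * lam ≠ 0 := by rwa [mul_comm]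
  field_simp
  linear_combination mu * hAug

end TrefoilAugmentation

/-- Converse inclusion for the trefoil augmentation variety: away from the locus
`Q² + λμ² = 0`, every point of the zero locus of the augmentation polynomial `Aug_T`
admits an augmentation, with explicit values `a₂₁ = (μ² − Q)/(Q² + λμ²)`, `a₁₂ = λ·a₂₁`. -/
theorem trefoil_polynomial_vanishes_implies_augmentation
    (lam mu Q : ℂ)
    (hAug : (mu ^ 4 - mu ^ 3) * lam ^ 2
      + (mu ^ 4 - Q * mu ^ 3 + 2 * Q ^ 2 * mu ^ 2 - 2 * Q * mu ^ 2
          - Q ^ 2 * mu + Q ^ 2) * lam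
      + (Q ^ 4 - Q ^ 3 * mu) = 0)
    (hden : Q ^ 2 + lam * mu ^ 2 ≠ 0) :
    ∃ a12 a21 : ℂ,
      a21 = (mu ^ 2 - Q) / (Q ^ 2 + lam * mu ^ 2) ∧
      a12 = lam * a21 ∧
      a12 - lam * a21 = 0 ∧
      lam * mu - lam - (2 * Q - mu) * a12 - Q * a12 ^ 2 * a21 = 0 ∧
      Q - mu + lam * mu * a21 + Q * a12 * a21 = 0 ∧
      mu - 1 - Q * a21 + mu * a12 * a21 = 0 :=
  ⟨_, trefoilA21 lam mu Q, rfl, rfl, sub_self _,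
    trefoil_differential_c11_eq_zero hAug hden, trefoil_differential_c21_eq_zero hAug hden,
    trefoil_differential_c22_eq_zero hAug hden⟩
end

section
/- Let R be an associative unital ring containing central invertible elements q and Q and invertible elements λ₁, μ₁, λ₂, μ₂ such that μ₁·λ₁ = q·λ₁·μ₁, μ₂·λ₂ = q·λ₂·μ₂, and each of λ₁, μ₁ commutes with each of λ₂, μ₂. Then the following two identities hold in R: (1) (qQλ₁ − μ₂⁻¹)·(1 − λ₁ − μ₁ + Qλ₁μ₁) − μ₁⁻¹·(q − 1)·(1 − qλ₁)·μ₁·μ₂⁻¹ = (q − qλ₁ − μ₁ + Qλ₁μ₁)·(Qλ₁ − μ₂⁻¹); and (2) (qQλ₁ − μ₂⁻¹)·q⁻¹ − μ₁⁻¹·(qQλ₁μ₁ − q⁻¹μ₁μ₂⁻¹) = 0. -/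
lemma quantum_torus_key (R : Type*) [Ring R] (s t K a b c B : R)
    (hst : s * t = 1) (hts : t * s = 1)
    (hs : ∀ r : R, s * r = r * s) (ht : ∀ r : R, t * r = r * t)
    (hK : ∀ r : R, K * r = r * K)
    (hba : b * a = s * (a * b))
    (hBb : B * b = 1) (hbB : b * B = 1)
    (hca : c * a = a * c) (hcb : c * b = b * c) :
    ((s * K * a - c) * (1 - a - b + K * a * b)
        - B * ((s - 1) * (1 - s * a) * b * c)
      = (s - s * a - b + K * a * b) * (K * a - c))
    ∧ ((s * K * a - c) * t - B * (s * K * a * b - t * b * c) = 0) := by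
  have sw : ∀ (z : R), (∀ r : R, z * r = r * z) → ∀ x y : R,
      x * (z * y) = z * (x * y) := by
    intro z hz x y
    rw [← mul_assoc, ← hz x, mul_assoc]
  -- letter-scalar swaps
  have as' : ∀ y, a * (s * y) = s * (a * y) := sw s hs a
  have bs' : ∀ y, b * (s * y) = s * (b * y) := sw s hs b
  have cs' : ∀ y, c * (s * y) = s * (c * y) := sw s hs c
  have Bs' : ∀ y, B * (s * y) = s * (B * y) := sw s hs B
  have at' : ∀ y, a * (t * y) = t * (a * y) := sw t ht a
  have bt' : ∀ y, b * (t * y) = t * (b * y) := sw t ht b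
  have ct' : ∀ y, c * (t * y) = t * (c * y) := sw t ht c
  have Bt' : ∀ y, B * (t * y) = t * (B * y) := sw t ht B
  have aK' : ∀ y, a * (K * y) = K * (a * y) := sw K hK a
  have bK' : ∀ y, b * (K * y) = K * (b * y) := sw K hK b
  have cK' : ∀ y, c * (K * y) = K * (c * y) := sw K hK c
  have BK' : ∀ y, B * (K * y) = K * (B * y) := sw K hK B
  have as0 : a * s = s * a := (hs a).symm
  have bs0 : b * s = s * b := (hs b).symm
  have cs0 : c * s = s * c := (hs c).symm
  have Bs0 : B * s = s * B := (hs B).symm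
  have at0 : a * t = t * a := (ht a).symm
  have bt0 : b * t = t * b := (ht b).symm
  have ct0 : c * t = t * c := (ht c).symm
  have Bt0 : B * t = t * B := (ht B).symm
  have aK0 : a * K = K * a := (hK a).symm
  have bK0 : b * K = K * b := (hK b).symm
  have cK0 : c * K = K * c := (hK c).symm
  have BK0 : B * K = K * B := (hK B).symm
  -- scalar-scalar rules
  have hst' : ∀ y, s * (t * y) = y := by intro y; rw [← mul_assoc, hst, one_mul]
  have hts' : ∀ y, t * (s * y) = y := by intro y; rw [← mul_assoc, hts, one_mul]
  have Ks' : ∀ y, K * (s * y) = s * (K * y) := sw s hs K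
  have Kt' : ∀ y, K * (t * y) = t * (K * y) := sw t ht K
  have Ks0 : K * s = s * K := (hs K).symm
  have Kt0 : K * t = t * K := (ht K).symm
  -- relations
  have hba' : ∀ y, b * (a * y) = s * (a * (b * y)) := by
    intro y; rw [← mul_assoc, hba, mul_assoc, mul_assoc]
  have hab : a * b = t * (b * a) := by
    rw [hba, ← mul_assoc, hts, one_mul]
  have hBa : B * a = t * (a * B) := by
    calc B * a = B * (a * b) * B := by rw [mul_assoc, mul_assoc, hbB, mul_one]
    _ = B * (t * (b * a)) * B := by rw [hab]
    _ = t * (a * B) := by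
        rw [Bt' (b * a), ← mul_assoc B b a, hBb, one_mul, mul_assoc]
  have hBa' : ∀ y, B * (a * y) = t * (a * (B * y)) := by
    intro y; rw [← mul_assoc, hBa, mul_assoc, mul_assoc]
  have hBb' : ∀ y, B * (b * y) = y := by
    intro y; rw [← mul_assoc, hBb, one_mul]
  have hca' : ∀ y, c * (a * y) = a * (c * y) := by
    intro y; rw [← mul_assoc, hca, mul_assoc]
  have hcb' : ∀ y, c * (b * y) = b * (c * y) := by
    intro y; rw [← mul_assoc, hcb, mul_assoc]
  constructor
  · simp only [mul_sub, sub_mul, mul_add, add_mul, mul_one, one_mul, mul_assoc,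
      hst', hts', Ks', Kt', Ks0, Kt0,
      as', bs', cs', Bs', at', bt', ct', Bt', aK', bK', cK', BK',
      as0, bs0, cs0, Bs0, at0, bt0, ct0, Bt0, aK0, bK0, cK0, BK0,
      hba', hba, hBa', hBa, hBb', hBb, hca', hca, hcb', hcb, hst, hts]
    abel
  · simp only [mul_sub, sub_mul, mul_add, add_mul, mul_one, one_mul, mul_assoc,
      hst', hts', Ks', Kt', Ks0, Kt0,
      as', bs', cs', Bs', at', bt', ct', Bt', aK', bK', cK', BK',
      as0, bs0, cs0, Bs0, at0, bt0, ct0, Bt0, aK0, bK0, cK0, BK0,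
      hba', hba, hBa', hBa, hBb', hBb, hca', hca, hcb', hcb, hst, hts]
    abel



/-- The elimination step `C := (qQλ₁ − μ₂⁻¹)·H(c₁₁) − μ₁⁻¹·∂_{a₁₂}H(c₂₁)` in the
Legendrian SFT computation for the Hopf link, in the two-variable quantum torus:
(1) computes the operator-free part giving the factored recursion relation
`C = (q − qλ₁ − μ₁ + Qλ₁μ₁)(Qλ₁ − μ₂⁻¹)`, and (2) is the cancellation of the
coefficients of `∂_{a₁₂}∂_{a₂₁}`. -/
theorem hopf_link_elimination_C
    (R : Type*) [Ring R] (q Q lam1 mu1 lam2 mu2 : Rˣ)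
    (hq : ∀ r : R, (q : R) * r = r * (q : R))
    (hQ : ∀ r : R, (Q : R) * r = r * (Q : R))
    (h1 : (mu1 : R) * (lam1 : R) = (q : R) * (lam1 : R) * (mu1 : R))
    (h2 : (mu2 : R) * (lam2 : R) = (q : R) * (lam2 : R) * (mu2 : R))
    (h12a : (lam1 : R) * (lam2 : R) = (lam2 : R) * (lam1 : R))
    (h12b : (lam1 : R) * (mu2 : R) = (mu2 : R) * (lam1 : R))
    (h12c : (mu1 : R) * (lam2 : R) = (lam2 : R) * (mu1 : R))
    (h12d : (mu1 : R) * (mu2 : R) = (mu2 : R) * (mu1 : R)) :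
    (((q : R) * (Q : R) * (lam1 : R) - ((mu2⁻¹ : Rˣ) : R)) *
          (1 - (lam1 : R) - (mu1 : R) + (Q : R) * (lam1 : R) * (mu1 : R))
        - ((mu1⁻¹ : Rˣ) : R) * (((q : R) - 1) * (1 - (q : R) * (lam1 : R)) *
            (mu1 : R) * ((mu2⁻¹ : Rˣ) : R))
      = ((q : R) - (q : R) * (lam1 : R) - (mu1 : R)
            + (Q : R) * (lam1 : R) * (mu1 : R)) *
          ((Q : R) * (lam1 : R) - ((mu2⁻¹ : Rˣ) : R)))
    ∧ (((q : R) * (Q : R) * (lam1 : R) - ((mu2⁻¹ : Rˣ) : R)) * ((q⁻¹ : Rˣ) : R)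
        - ((mu1⁻¹ : Rˣ) : R) * ((q : R) * (Q : R) * (lam1 : R) * (mu1 : R)
            - ((q⁻¹ : Rˣ) : R) * (mu1 : R) * ((mu2⁻¹ : Rˣ) : R))
      = 0) := by
  have hs := hq
  have ht : ∀ r : R, ((q⁻¹ : Rˣ) : R) * r = r * ((q⁻¹ : Rˣ) : R) := by
    intro r
    have h : Commute ((q : R)) r := hq r
    exact h.units_inv_left
  have hca : ((mu2⁻¹ : Rˣ) : R) * (lam1 : R) = (lam1 : R) * ((mu2⁻¹ : Rˣ) : R) := by
    have h : Commute ((lam1 : R)) ((mu2 : R)) := h12b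
    exact (h.units_inv_right).symm
  have hcb : ((mu2⁻¹ : Rˣ) : R) * (mu1 : R) = (mu1 : R) * ((mu2⁻¹ : Rˣ) : R) := by
    have h : Commute ((mu1 : R)) ((mu2 : R)) := h12d
    exact (h.units_inv_right).symm
  have hba : (mu1 : R) * (lam1 : R) = (q : R) * ((lam1 : R) * (mu1 : R)) := by
    rw [h1, mul_assoc]
  exact quantum_torus_key R (q : R) ((q⁻¹ : Rˣ) : R) (Q : R) (lam1 : R) (mu1 : R)
    ((mu2⁻¹ : Rˣ) : R) ((mu1⁻¹ : Rˣ) : R) q.mul_inv q.inv_mul hs ht hQ hba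
    mu1.inv_mul mu1.mul_inv hca hcb
end
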